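/- arXiv:2207.08238 — 5 statements merged into one kernel-verified Lean document; each statement's English description precedes it below -/
import Mathlib

section
/- For any parameter set A ⊆ M and any pair of Keisler measures μ ∈ 𝔐_x(A) and ν ∈ 𝔐_y(A), there exists a separated amalgam ω ∈ 𝔐_xy(A) such that π_x(ω) = μ and π_y(ω) = ν. -/
open FirstOrder

/-- A Keisler measure over the parameter set `A`, in the variables indexed by `α`:
a finitely additive probability measure on the Boolean algebra of `A`-definable
subsets of `M^α` (i.e. on `L_α(A)`).  The function `toFun` is defined on all sets,
but only its values on `A`-definable sets are constrained (and relevant). -/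
structure KeislerMeasure (L : FirstOrder.Language) (M : Type*) [L.Structure M]
    (A : Set M) (α : Type*) where
  toFun : Set (α → M) → ℝ
  measure_univ : toFun Set.univ = 1
  nonneg' : ∀ s : Set (α → M), A.Definable L s → 0 ≤ toFun s
  compl' : ∀ s : Set (α → M), A.Definable L s → toFun sᶜ = 1 - toFun s
  union_inter' : ∀ s t : Set (α → M), A.Definable L s → A.Definable L t →
    toFun (s ∪ t) = toFun s + toFun t - toFun (s ∩ t)

/-- Pull back a set of variable assignments along a variable reindexing map:
for `S ⊆ M^α` and `f : α → β`, `cyl f S ⊆ M^β` is the corresponding cylinder.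
E.g. `cyl Sum.inl X = X × M^β` inside `M^(α ⊕ β)`. -/
def cyl {M : Type*} {α β : Type*} (f : α → β) (S : Set (α → M)) : Set (β → M) :=
  {g : β → M | (fun a => g (f a)) ∈ S}

/-- The product `X × Y` of a set in variables `α` and a set in variables `β`,
viewed inside the variables `α ⊕ β`. -/
def prodSet {M : Type*} {α β : Type*} (X : Set (α → M)) (Y : Set (β → M)) :
    Set (α ⊕ β → M) :=
  cyl Sum.inl X ∩ cyl Sum.inr Y

/-!
Define the product on linear combinations of indicators of definable rectangles `X × Y` by
`∑ cᵢ 1_{Xᵢ × Yᵢ} ↦ ∑ cᵢ μ(Xᵢ) ν(Yᵢ)`. This functional is positive, hence well defined: if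
`∑ cᵢ 1_{Xᵢ}(x) 1_{Yᵢ}(y) ≥ 0` everywhere, integrating first in `x` against `μ` for each fixed `y`
and then in `y` against `ν` gives `∑ cᵢ μ(Xᵢ) ν(Yᵢ) ≥ 0`. The M. Riesz extension theorem extends
it to a positive linear functional on all bounded functions on `M^(α ⊕ β)`, and its values on
indicators form the separated amalgam.
-/

section Rectangles

variable {M α β : Type*}

theorem indicator_prodSet_sumElim (X : Set (α → M)) (Y : Set (β → M)) (f : α → M)
    (g : β → M) :
    (prodSet X Y).indicator 1 (Sum.elim f g) =
      X.indicator (1 : (α → M) → ℝ) f * Y.indicator 1 g := by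
  by_cases hf : f ∈ X <;> by_cases hg : g ∈ Y <;> simp [prodSet, cyl, hf, hg]

theorem cyl_inl_eq_prodSet_univ (X : Set (α → M)) :
    cyl Sum.inl X = prodSet X (Set.univ : Set (β → M)) := by
  ext z; simp [prodSet, cyl]

theorem cyl_inr_eq_prodSet_univ (Y : Set (β → M)) :
    cyl Sum.inr Y = prodSet (Set.univ : Set (α → M)) Y := by
  ext z; simp [prodSet, cyl]

theorem prodSet_univ_univ : prodSet (Set.univ : Set (α → M)) (Set.univ : Set (β → M)) = .univ := by
  ext z; simp [prodSet, cyl]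

end Rectangles

namespace KeislerMeasure

variable {L : FirstOrder.Language} {M : Type*} [L.Structure M] {A : Set M} {γ : Type*}
  (m : KeislerMeasure L M A γ)

theorem toFun_empty : m.toFun ∅ = 0 := by
  have h := m.compl' Set.univ Set.definable_univ
  rwa [Set.compl_univ, m.measure_univ, sub_self] at h

theorem toFun_inter_add_inter_compl {S T : Set (γ → M)} (hS : A.Definable L S)
    (hT : A.Definable L T) : m.toFun (S ∩ T) + m.toFun (S ∩ Tᶜ) = m.toFun S := by
  have hdisj : S ∩ T ∩ (S ∩ Tᶜ) = ∅ :=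
    (disjoint_compl_right.mono Set.inter_subset_right Set.inter_subset_right).inter_eq
  have h := m.union_inter' _ _ (hS.inter hT) (hS.inter hT.compl)
  rw [← Set.inter_union_distrib_left, Set.union_compl_self, Set.inter_univ, hdisj,
    toFun_empty] at h
  linarith

/-- The constant `a` absorbs the coefficient `c j` when the induction restricts to `D ∩ X j`. -/
theorem add_sum_mul_toFun_inter_nonneg {ι : Type*} {c : ι → ℝ} {X : ι → Set (γ → M)}
    (hX : ∀ i, A.Definable L (X i)) (s : Finset ι) {D : Set (γ → M)} {a : ℝ}
    (hD : A.Definable L D) (h : ∀ x ∈ D, 0 ≤ a + ∑ i ∈ s, c i * (X i).indicator 1 x) :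
    0 ≤ a * m.toFun D + ∑ i ∈ s, c i * m.toFun (D ∩ X i) := by
  classical
  induction s using Finset.induction_on generalizing D a with
  | empty =>
    rcases D.eq_empty_or_nonempty with rfl | ⟨x, hx⟩
    · simp [toFun_empty]
    · simpa using mul_nonneg (by simpa using h x hx) (m.nonneg' D hD)
  | insert j s hj ih =>
    have hin := ih (hD.inter (hX j)) (a := a + c j) fun x hx => by
      have := h x hx.1
      rw [Finset.sum_insert hj, Set.indicator_of_mem hx.2, Pi.one_apply] at this
      linarith
    have hout := ih (hD.inter (hX j).compl) (a := a) fun x hx => by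
      have := h x hx.1
      rwa [Finset.sum_insert hj, Set.indicator_of_notMem hx.2, mul_zero, zero_add] at this
    have hsplit (i : ι) :
        m.toFun (D ∩ X j ∩ X i) + m.toFun (D ∩ (X j)ᶜ ∩ X i) = m.toFun (D ∩ X i) := by
      rw [Set.inter_right_comm, Set.inter_right_comm D (X j)ᶜ]
      exact m.toFun_inter_add_inter_compl (hD.inter (hX i)) (hX j)
    rw [Finset.sum_insert hj, ← m.toFun_inter_add_inter_compl hD (hX j)]
    simp only [← hsplit, mul_add, Finset.sum_add_distrib] at hin hout ⊢
    linarith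

theorem sum_mul_toFun_nonneg {ι : Type*} {c : ι → ℝ} {X : ι → Set (γ → M)}
    (hX : ∀ i, A.Definable L (X i)) (s : Finset ι)
    (h : ∀ x, 0 ≤ ∑ i ∈ s, c i * (X i).indicator 1 x) :
    0 ≤ ∑ i ∈ s, c i * m.toFun (X i) := by
  simpa using m.add_sum_mul_toFun_inter_nonneg hX s Set.definable_univ (a := 0)
    fun x _ => by simpa using h x

variable {α β : Type*}

theorem sum_mul_toFun_mul_toFun_nonneg (mu : KeislerMeasure L M A α)
    (nu : KeislerMeasure L M A β) {ι : Type*} {c : ι → ℝ} {X : ι → Set (α → M)}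
    {Y : ι → Set (β → M)} (hX : ∀ i, A.Definable L (X i)) (hY : ∀ i, A.Definable L (Y i))
    (s : Finset ι) (h : ∀ z, 0 ≤ ∑ i ∈ s, c i * (prodSet (X i) (Y i)).indicator 1 z) :
    0 ≤ ∑ i ∈ s, c i * mu.toFun (X i) * nu.toFun (Y i) := by
  have hsection (g : β → M) : 0 ≤ ∑ i ∈ s, c i * mu.toFun (X i) * (Y i).indicator 1 g := by
    refine (mu.sum_mul_toFun_nonneg (c := fun i => c i * (Y i).indicator 1 g) hX s
      fun f => ?_).trans_eq (Finset.sum_congr rfl fun i _ => by ring)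
    simpa only [indicator_prodSet_sumElim, mul_comm, mul_left_comm] using h (Sum.elim f g)
  simpa only [mul_assoc] using nu.sum_mul_toFun_nonneg (c := fun i => c i * mu.toFun (X i)) hY s
    (by simpa only [mul_assoc] using hsection)

end KeislerMeasure

theorem exists_nonneg_linearMap_comp_eq {V E : Type*} [AddCommGroup V] [Module ℝ V]
    [AddCommGroup E] [Module ℝ E] (s : PointedCone ℝ E) (φ : V →ₗ[ℝ] E) (ψ : V →ₗ[ℝ] ℝ)
    (nonneg : ∀ v, φ v ∈ s → 0 ≤ ψ v) (dense : ∀ y, ∃ v, φ v + y ∈ s) :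
    ∃ g : E →ₗ[ℝ] ℝ, g ∘ₗ φ = ψ ∧ ∀ x ∈ s, 0 ≤ g x := by
  have hker : LinearMap.ker φ ≤ LinearMap.ker ψ := fun v hv => by
    rw [LinearMap.mem_ker] at hv ⊢
    have hpos := nonneg v (hv ▸ s.zero_mem)
    have hneg := nonneg (-v) (by rw [map_neg, hv, neg_zero]; exact s.zero_mem)
    rw [map_neg] at hneg
    linarith
  let f : E →ₗ.[ℝ] ℝ :=
    ⟨LinearMap.range φ, (LinearMap.ker φ).liftQ ψ hker ∘ₗ φ.quotKerEquivRange.symm.toLinearMap⟩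
  have hf (v : V) : f ⟨φ v, LinearMap.mem_range_self φ v⟩ = ψ v := by simp [f]
  obtain ⟨g, hgf, hg⟩ := riesz_extension s f (fun ⟨_, v, rfl⟩ hv => hf v ▸ nonneg v hv)
    fun y => let ⟨v, hv⟩ := dense y; ⟨⟨φ v, LinearMap.mem_range_self φ v⟩, hv⟩
  exact ⟨g, LinearMap.ext fun v => (hgf _).trans (hf v), hg⟩

/-- Bounded, so that every element is dominated from below by a constant: this is the
`p + s = E` hypothesis of the Riesz extension theorem. -/
def boundedFunctions (Z : Type*) : Submodule ℝ (Z → ℝ) where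
  carrier := {h | ∃ C, ∀ z, |h z| ≤ C}
  add_mem' := by
    rintro a b ⟨C, hC⟩ ⟨D, hD⟩
    exact ⟨C + D, fun z => (abs_add_le _ _).trans (add_le_add (hC z) (hD z))⟩
  zero_mem' := ⟨0, by simp⟩
  smul_mem' := by
    rintro c a ⟨C, hC⟩
    exact ⟨|c| * C, fun z => by
      rw [Pi.smul_apply, smul_eq_mul, abs_mul]
      exact mul_le_mul_of_nonneg_left (hC z) (abs_nonneg c)⟩

namespace boundedFunctions

variable {Z : Type*}

noncomputable def indicator (S : Set Z) : boundedFunctions Z :=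
  ⟨S.indicator 1, 1, fun z => by by_cases hz : z ∈ S <;> simp [hz]⟩

@[simp]
theorem coe_indicator (S : Set Z) : (indicator S : Z → ℝ) = S.indicator 1 := rfl

theorem indicator_compl (S : Set Z) : indicator Sᶜ = indicator .univ - indicator S :=
  Subtype.ext (by simp [Set.indicator_compl])

theorem indicator_union_add_indicator_inter (S T : Set Z) :
    indicator (S ∪ T) + indicator (S ∩ T) = indicator S + indicator T :=
  Subtype.ext (Set.indicator_union_add_inter _ S T)

def nonnegCone (Z : Type*) : PointedCone ℝ (boundedFunctions Z) :=
  (PointedCone.positive ℝ (Z → ℝ)).comap (boundedFunctions Z).subtype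

theorem mem_nonnegCone {x : boundedFunctions Z} : x ∈ nonnegCone Z ↔ 0 ≤ (x : Z → ℝ) :=
  Iff.rfl

end boundedFunctions

namespace KeislerMeasure

open boundedFunctions

variable {L : FirstOrder.Language} {M : Type*} [L.Structure M] {A : Set M} {γ : Type*}

noncomputable def ofPositiveFunctional (g : boundedFunctions (γ → M) →ₗ[ℝ] ℝ)
    (hg : ∀ x ∈ nonnegCone (γ → M), 0 ≤ g x)
    (huniv : g (indicator .univ) = 1) : KeislerMeasure L M A γ where
  toFun S := g (indicator S)
  measure_univ := huniv
  nonneg' S _ := hg _ (mem_nonnegCone.mpr (Set.indicator_nonneg fun _ _ => zero_le_one))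
  compl' S _ := by rw [indicator_compl, map_sub, huniv]
  union_inter' S T _ _ := by
    have h := congrArg g (indicator_union_add_indicator_inter S T)
    rw [map_add, map_add] at h
    linarith

@[simp]
theorem toFun_ofPositiveFunctional (g : boundedFunctions (γ → M) →ₗ[ℝ] ℝ)
    (hg : ∀ x ∈ nonnegCone (γ → M), 0 ≤ g x) (huniv : g (indicator .univ) = 1)
    (S : Set (γ → M)) :
    (ofPositiveFunctional g hg huniv : KeislerMeasure L M A γ).toFun S = g (indicator S) :=
  rfl

variable {α β : Type*}

theorem exists_positive_functional_indicator_prodSet_eq_mul (mu : KeislerMeasure L M A α)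
    (nu : KeislerMeasure L M A β) :
    ∃ g : boundedFunctions (α ⊕ β → M) →ₗ[ℝ] ℝ,
      (∀ x ∈ nonnegCone (α ⊕ β → M), 0 ≤ g x) ∧
      ∀ X Y, A.Definable L X → A.Definable L Y →
        g (indicator (prodSet X Y)) = mu.toFun X * nu.toFun Y := by
  let ι := {r : Set (α → M) × Set (β → M) // A.Definable L r.1 ∧ A.Definable L r.2}
  let φ := Finsupp.linearCombination ℝ fun r : ι => indicator (prodSet r.1.1 r.1.2)
  let ψ := Finsupp.linearCombination ℝ fun r : ι => mu.toFun r.1.1 * nu.toFun r.1.2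
  have nonneg (c : ι →₀ ℝ) (hc : φ c ∈ nonnegCone _) : 0 ≤ ψ c := by
    simp only [mem_nonnegCone, φ, Finsupp.linearCombination_apply, Finsupp.sum, Submodule.coe_sum,
      Submodule.coe_smul, coe_indicator, Pi.le_def] at hc
    simp only [ψ, Finsupp.linearCombination_apply, Finsupp.sum, smul_eq_mul, ← mul_assoc]
    exact sum_mul_toFun_mul_toFun_nonneg mu nu (fun r => r.2.1) (fun r => r.2.2) c.support
      fun z => by simpa using hc z
  have dense (y : boundedFunctions (α ⊕ β → M)) : ∃ c, φ c + y ∈ nonnegCone _ := by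
    obtain ⟨C, hC⟩ := y.2
    refine ⟨Finsupp.single ⟨(.univ, .univ), Set.definable_univ, Set.definable_univ⟩ C,
      mem_nonnegCone.mpr fun z => ?_⟩
    simpa [φ, prodSet_univ_univ, add_comm] using neg_le_iff_add_nonneg.mp (abs_le.mp (hC z)).1
  obtain ⟨g, hgφ, hg⟩ := exists_nonneg_linearMap_comp_eq (nonnegCone _) φ ψ nonneg dense
  refine ⟨g, hg, fun X Y hX hY => ?_⟩
  simpa [φ, ψ] using LinearMap.congr_fun hgφ (Finsupp.single ⟨(X, Y), hX, hY⟩ 1)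

end KeislerMeasure

/-- For any pair of Keisler measures `μ ∈ 𝔐_α(A)` and `ν ∈ 𝔐_β(A)`, there exists a
separated amalgam `ω ∈ 𝔐_{αβ}(A)` with `π_α(ω) = μ` and `π_β(ω) = ν`. -/
theorem exists_separated_amalgam {L : FirstOrder.Language} {M : Type*} [L.Structure M]
    (A : Set M) {α β : Type*}
    (mu : KeislerMeasure L M A α) (nu : KeislerMeasure L M A β) :
    ∃ om : KeislerMeasure L M A (α ⊕ β),
      (∀ X : Set (α → M), A.Definable L X → om.toFun (cyl Sum.inl X) = mu.toFun X) ∧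
      (∀ Y : Set (β → M), A.Definable L Y → om.toFun (cyl Sum.inr Y) = nu.toFun Y) ∧
      (∀ (X : Set (α → M)) (Y : Set (β → M)), A.Definable L X → A.Definable L Y →
        om.toFun (prodSet X Y) =
          om.toFun (cyl Sum.inl X) * om.toFun (cyl Sum.inr Y)) := by
  obtain ⟨g, hg, hprod⟩ := KeislerMeasure.exists_positive_functional_indicator_prodSet_eq_mul mu nu
  have huniv : g (boundedFunctions.indicator .univ) = 1 := by
    simpa [prodSet_univ_univ, mu.measure_univ, nu.measure_univ] using
      hprod _ _ Set.definable_univ Set.definable_univ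
  let om : KeislerMeasure L M A (α ⊕ β) := .ofPositiveFunctional g hg huniv
  have hinl (X : Set (α → M)) (hX : A.Definable L X) :
      om.toFun (cyl Sum.inl X) = mu.toFun X := by
    simpa [om, cyl_inl_eq_prodSet_univ, nu.measure_univ] using hprod X _ hX Set.definable_univ
  have hinr (Y : Set (β → M)) (hY : A.Definable L Y) :
      om.toFun (cyl Sum.inr Y) = nu.toFun Y := by
    simpa [om, cyl_inr_eq_prodSet_univ, mu.measure_univ] using hprod _ Y Set.definable_univ hY
  exact ⟨om, hinl, hinr, fun X Y hX hY => by rw [hinl X hX, hinr Y hY]; exact hprod X Y hX hY⟩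
end

section
/- Let p ∈ S_x(M), q ∈ S_y(M) be global complete types and A ⊆ M. If p dominates q over A (p ≥_{D,A} q), then the Dirac measure δ_p extension dominates δ_q over A (δ_p ≥_{E,A} δ_q). -/
/-! Take `λ = δ_r` for the type `r` witnessing `p ≥_{D,A} q`. If some `ω ∈ E(δ_r, δ_p)`
gave `M^x × Y` measure `< 1` for some `Y ∈ q`, then the complement of `M^x × Y` has positive
measure, so it lies in a global type `w` containing every definable set of `ω`-measure `1`.
Such a `w` extends `r` and contains `X × M^y` for all `X ∈ p`, so domination puts `M^x × Y`
in `w`: a contradiction. -/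

open FirstOrder

/-- The extension space `E(λ, μ)`: all global Keisler measures `ω` in the
variables `α ⊕ β` whose restriction to `A`-definable sets is `λ` and whose
marginal `π_α(ω)` is `μ`. -/
def extSpace (L : FirstOrder.Language) {M : Type*} [L.Structure M] (A : Set M)
    {α β : Type*} (lam : KeislerMeasure L M A (α ⊕ β))
    (mu : KeislerMeasure L M (Set.univ : Set M) α) :
    Set (KeislerMeasure L M (Set.univ : Set M) (α ⊕ β)) :=
  {om | (∀ s : Set (α ⊕ β → M), A.Definable L s → om.toFun s = lam.toFun s) ∧
    (∀ X : Set (α → M), (Set.univ : Set M).Definable L X →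
      om.toFun (cyl Sum.inl X) = mu.toFun X)}

/-- `μ` extension dominates `ν` over `A` (written `μ ≥_{E,A} ν`): there is
`λ ∈ 𝔐_{αβ}(A)` with `π_α(λ) = μ|_A` such that `π_β(ω) = ν` for every
`ω ∈ E(λ, μ)`. -/
def ExtDomOver (L : FirstOrder.Language) {M : Type*} [L.Structure M] (A : Set M)
    {α β : Type*} (mu : KeislerMeasure L M (Set.univ : Set M) α)
    (nu : KeislerMeasure L M (Set.univ : Set M) β) : Prop :=
  ∃ lam : KeislerMeasure L M A (α ⊕ β),
    (∀ X : Set (α → M), A.Definable L X →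
      lam.toFun (cyl Sum.inl X) = mu.toFun X) ∧
    ∀ om ∈ extSpace L A lam mu, ∀ Y : Set (β → M),
      (Set.univ : Set M).Definable L Y → om.toFun (cyl Sum.inr Y) = nu.toFun Y

/-- A complete type over `A` in the variables `α`: an ultrafilter on the
Boolean algebra of `A`-definable subsets of `M^α`. -/
structure CompleteType (L : FirstOrder.Language) (M : Type*) [L.Structure M]
    (A : Set M) (α : Type*) where
  sets : Set (Set (α → M))
  definable_of_mem : ∀ s ∈ sets, A.Definable L s
  univ_mem : Set.univ ∈ sets
  empty_not_mem : ∅ ∉ sets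
  inter_mem : ∀ s ∈ sets, ∀ t ∈ sets, s ∩ t ∈ sets
  superset_mem : ∀ s ∈ sets, ∀ t : Set (α → M), A.Definable L t → s ⊆ t → t ∈ sets
  mem_or_compl_mem : ∀ s : Set (α → M), A.Definable L s → s ∈ sets ∨ sᶜ ∈ sets

/-- `p ∈ S_α(M)` dominates `q ∈ S_β(M)` over `A` (`p ≥_{D,A} q`): there is a complete
type `r ∈ S_{αβ}(A)` such that `X × M^β ∈ r` for every `A`-definable `X ∈ p`, and every
complete global type `w ∈ S_{αβ}(M)` extending `r` with `X × M^β ∈ w` for all `X ∈ p`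
satisfies `M^α × Y ∈ w` for all `Y ∈ q`. -/
def TypeDomOver (L : FirstOrder.Language) {M : Type*} [L.Structure M] (A : Set M)
    {α β : Type*} (p : CompleteType L M (Set.univ : Set M) α)
    (q : CompleteType L M (Set.univ : Set M) β) : Prop :=
  ∃ r : CompleteType L M A (α ⊕ β),
    (∀ X ∈ p.sets, A.Definable L X → cyl Sum.inl X ∈ r.sets) ∧
    ∀ w : CompleteType L M (Set.univ : Set M) (α ⊕ β),
      r.sets ⊆ w.sets → (∀ X ∈ p.sets, cyl Sum.inl X ∈ w.sets) →
      ∀ Y ∈ q.sets, cyl Sum.inr Y ∈ w.sets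

namespace KeislerMeasure

variable {L : FirstOrder.Language} {M : Type*} [L.Structure M] {A : Set M} {α β : Type*}
  (ω : KeislerMeasure L M A α)

lemma toFun_le_one {s : Set (α → M)} (hs : A.Definable L s) : ω.toFun s ≤ 1 := by
  linarith [ω.nonneg' sᶜ hs.compl, ω.compl' s hs]

lemma toFun_empty_s4 : ω.toFun (∅ : Set (α → M)) = 0 := by
  have h := ω.compl' Set.univ Set.definable_univ
  rw [Set.compl_univ, ω.measure_univ] at h
  linarith

lemma add_sub_one_le_toFun_inter {s t : Set (α → M)} (hs : A.Definable L s)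
    (ht : A.Definable L t) : ω.toFun s + ω.toFun t - 1 ≤ ω.toFun (s ∩ t) := by
  linarith [ω.union_inter' s t hs ht, ω.toFun_le_one (hs.union ht)]

lemma toFun_compl_eq_zero {s : Set (α → M)} (hs : A.Definable L s) (h : ω.toFun s = 1) :
    ω.toFun sᶜ = 0 := by
  rw [ω.compl' s hs, h, sub_self]

def fullMeasureFilter : Filter (α → M) where
  sets := {U | ∃ S, A.Definable L S ∧ ω.toFun S = 1 ∧ S ⊆ U}
  univ_sets := ⟨Set.univ, Set.definable_univ, ω.measure_univ, subset_rfl⟩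
  sets_of_superset := fun ⟨S, hS, hS1, hSU⟩ hUV => ⟨S, hS, hS1, hSU.trans hUV⟩
  inter_sets := fun ⟨S, hS, hS1, hSU⟩ ⟨T, hT, hT1, hTV⟩ =>
    ⟨S ∩ T, hS.inter hT,
      le_antisymm (ω.toFun_le_one (hS.inter hT))
        (by linarith [ω.add_sub_one_le_toFun_inter hS hT]),
      Set.inter_subset_inter hSU hTV⟩

lemma mem_fullMeasureFilter {S : Set (α → M)} (hS : A.Definable L S) (h : ω.toFun S = 1) :
    S ∈ ω.fullMeasureFilter :=
  ⟨S, hS, h, subset_rfl⟩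

lemma fullMeasureFilter_inf_principal_neBot {T : Set (α → M)} (hT : A.Definable L T)
    (hpos : 0 < ω.toFun T) : (ω.fullMeasureFilter ⊓ Filter.principal T).NeBot := by
  refine Filter.inf_principal_neBot_iff.2 fun U ⟨S, hS, hS1, hSU⟩ => ?_
  refine (Set.nonempty_iff_ne_empty.2 fun hST => ?_).mono
    (Set.inter_subset_inter_left T hSU)
  have := ω.add_sub_one_le_toFun_inter hS hT
  rw [hST, ω.toFun_empty_s4, hS1] at this
  linarith

/-- The marginal of `ω` along a reindexing of variables `f`; `π_y(ω)` is
`ω.marginal Sum.inr`. -/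
def marginal (f : β → α) : KeislerMeasure L M A β where
  toFun S := ω.toFun (cyl f S)
  measure_univ := ω.measure_univ
  nonneg' _ hS := ω.nonneg' _ (hS.preimage_comp f)
  compl' _ hS := ω.compl' _ (hS.preimage_comp f)
  union_inter' _ _ hS hT := ω.union_inter' _ _ (hS.preimage_comp f) (hT.preimage_comp f)

@[simp] lemma marginal_toFun (f : β → α) (S : Set (β → M)) :
    (ω.marginal f).toFun S = ω.toFun (cyl f S) := rfl

end KeislerMeasure

namespace CompleteType

variable {L : FirstOrder.Language} {M : Type*} [L.Structure M] {A : Set M} {α β : Type*}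

lemma compl_not_mem (r : CompleteType L M A α) {s : Set (α → M)} (hs : s ∈ r.sets) :
    sᶜ ∉ r.sets :=
  fun hc => r.empty_not_mem (Set.inter_compl_self s ▸ r.inter_mem s hs sᶜ hc)

lemma compl_mem_of_not_mem (r : CompleteType L M A α) {s : Set (α → M)}
    (hs : A.Definable L s) (h : s ∉ r.sets) : sᶜ ∈ r.sets :=
  (r.mem_or_compl_mem s hs).resolve_left h

def ofUltrafilter (U : Ultrafilter (α → M)) : CompleteType L M A α where
  sets := {S | A.Definable L S ∧ S ∈ U}
  definable_of_mem _ hs := hs.1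
  univ_mem := ⟨Set.definable_univ, Filter.univ_mem⟩
  empty_not_mem h := U.empty_notMem h.2
  inter_mem _ hs _ ht := ⟨hs.1.inter ht.1, Filter.inter_mem hs.2 ht.2⟩
  superset_mem _ hs _ ht hst := ⟨ht, Filter.mem_of_superset hs.2 hst⟩
  mem_or_compl_mem s hs :=
    (U.mem_or_compl_mem s).imp (fun h => ⟨hs, h⟩) (fun h => ⟨hs.compl, h⟩)

open Classical in
noncomputable def dirac (r : CompleteType L M A α) : KeislerMeasure L M A α where
  toFun s := if s ∈ r.sets then 1 else 0
  measure_univ := if_pos r.univ_mem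
  nonneg' s _ := by split <;> norm_num
  compl' s hs := by
    by_cases h : s ∈ r.sets
    · rw [if_pos h, if_neg (r.compl_not_mem h)]; norm_num
    · rw [if_neg h, if_pos (r.compl_mem_of_not_mem hs h)]; norm_num
  union_inter' s t hs ht := by
    have hst : s ∪ t ∈ r.sets ↔ s ∈ r.sets ∨ t ∈ r.sets := by
      refine ⟨fun h => by_contra fun hn => r.compl_not_mem h ?_, ?_⟩
      · rw [Set.compl_union]
        exact r.inter_mem _ (r.compl_mem_of_not_mem hs (not_or.1 hn).1)
          _ (r.compl_mem_of_not_mem ht (not_or.1 hn).2)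
      · rintro (h | h)
        · exact r.superset_mem s h _ (hs.union ht) Set.subset_union_left
        · exact r.superset_mem t h _ (hs.union ht) Set.subset_union_right
    have hst' : s ∩ t ∈ r.sets ↔ s ∈ r.sets ∧ t ∈ r.sets :=
      ⟨fun h => ⟨r.superset_mem _ h s hs Set.inter_subset_left,
        r.superset_mem _ h t ht Set.inter_subset_right⟩, fun h => r.inter_mem s h.1 t h.2⟩
    simp only [hst, hst']
    by_cases s ∈ r.sets <;> by_cases t ∈ r.sets <;> simp_all

open Classical in
@[simp] lemma dirac_toFun (r : CompleteType L M A α) (s : Set (α → M)) :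
    r.dirac.toFun s = if s ∈ r.sets then 1 else 0 := rfl

lemma cyl_mem_iff_of_forall_mem {B : Set M} (hAB : A ⊆ B) (r : CompleteType L M A β)
    (p : CompleteType L M B α) (f : α → β)
    (hpr : ∀ X ∈ p.sets, A.Definable L X → cyl f X ∈ r.sets)
    {X : Set (α → M)} (hX : A.Definable L X) : cyl f X ∈ r.sets ↔ X ∈ p.sets := by
  refine ⟨fun h => by_contra fun hXp => r.compl_not_mem h ?_, fun h => hpr X h hX⟩
  exact hpr Xᶜ (p.compl_mem_of_not_mem (hX.mono hAB) hXp) hX.compl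

end CompleteType

namespace KeislerMeasure

variable {L : FirstOrder.Language} {M : Type*} [L.Structure M] {A : Set M} {α : Type*}
  (ω : KeislerMeasure L M A α)

lemma exists_completeType_mem_of_pos {T : Set (α → M)} (hT : A.Definable L T)
    (hpos : 0 < ω.toFun T) : ∃ w : CompleteType L M A α, T ∈ w.sets ∧
      ∀ S, A.Definable L S → ω.toFun S = 1 → S ∈ w.sets := by
  have := ω.fullMeasureFilter_inf_principal_neBot hT hpos
  obtain ⟨U, hU⟩ := Ultrafilter.exists_le (ω.fullMeasureFilter ⊓ Filter.principal T)
  refine ⟨CompleteType.ofUltrafilter U,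
    ⟨hT, hU (Filter.mem_inf_of_right (Filter.mem_principal_self T))⟩,
    fun S hS hS1 => ⟨hS, hU (Filter.mem_inf_of_left (ω.mem_fullMeasureFilter hS hS1))⟩⟩

lemma toFun_eq_one_of_forall_completeType {S : Set (α → M)} (hS : A.Definable L S)
    (h : ∀ w : CompleteType L M A α,
      (∀ T, A.Definable L T → ω.toFun T = 1 → T ∈ w.sets) → S ∈ w.sets) :
    ω.toFun S = 1 := by
  by_contra hne
  have hpos : 0 < ω.toFun Sᶜ := by
    rw [ω.compl' S hS]
    linarith [lt_of_le_of_ne (ω.toFun_le_one hS) hne]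
  obtain ⟨w, hSw, hw⟩ := ω.exists_completeType_mem_of_pos hS.compl hpos
  exact w.compl_not_mem (h w hw) hSw

lemma toFun_eq_dirac_of_forall_mem {q : CompleteType L M A α}
    (hq : ∀ s ∈ q.sets, ω.toFun s = 1) {s : Set (α → M)} (hs : A.Definable L s) :
    ω.toFun s = q.dirac.toFun s := by
  rw [CompleteType.dirac_toFun]
  split_ifs with h
  · exact hq s h
  · rw [← compl_compl s]
    exact ω.toFun_compl_eq_zero hs.compl (hq _ (q.compl_mem_of_not_mem hs h))

end KeislerMeasure

/-- If `p ≥_{D,A} q` then `δ_p ≥_{E,A} δ_q`: domination of global types implies extension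
domination of the corresponding Dirac measures.  (`dp` and `dq` are the Dirac measures
of `p` and `q` respectively, characterized by their values on definable sets.) -/
theorem extDom_of_typeDom {L : FirstOrder.Language} {M : Type*} [L.Structure M]
    (A : Set M) {α β : Type*}
    (p : CompleteType L M (Set.univ : Set M) α)
    (q : CompleteType L M (Set.univ : Set M) β)
    (hdom : TypeDomOver L A p q)
    (dp : KeislerMeasure L M (Set.univ : Set M) α)
    (dq : KeislerMeasure L M (Set.univ : Set M) β)
    (hdp : ∀ s : Set (α → M), (Set.univ : Set M).Definable L s →
      (s ∈ p.sets → dp.toFun s = 1) ∧ (s ∉ p.sets → dp.toFun s = 0))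
    (hdq : ∀ s : Set (β → M), (Set.univ : Set M).Definable L s →
      (s ∈ q.sets → dq.toFun s = 1) ∧ (s ∉ q.sets → dq.toFun s = 0)) :
    ExtDomOver L A dp dq := by
  obtain ⟨r, hr_inl, hr_dom⟩ := hdom
  refine ⟨r.dirac, fun X hX => ?_, fun om ⟨hom_r, hom_p⟩ Y hY => ?_⟩
  · classical
    have hXu := hX.mono (Set.subset_univ A)
    rw [dp.toFun_eq_dirac_of_forall_mem (fun s hs => (hdp s (p.definable_of_mem s hs)).1 hs) hXu]
    exact if_congr
      (CompleteType.cyl_mem_iff_of_forall_mem (Set.subset_univ A) r p Sum.inl hr_inl hX) rfl rfl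
  · have hq : ∀ Y ∈ q.sets, (om.marginal Sum.inr).toFun Y = 1 := by
      refine fun Y hYq => om.toFun_eq_one_of_forall_completeType
        ((q.definable_of_mem Y hYq).preimage_comp Sum.inr) fun w hw => hr_dom w ?_ ?_ Y hYq
      · intro s hs
        have hsA := r.definable_of_mem s hs
        exact hw s (hsA.mono (Set.subset_univ A)) (by simp [hom_r s hsA, hs])
      · intro X hXp
        have hXu := p.definable_of_mem X hXp
        exact hw _ (hXu.preimage_comp Sum.inl) (by rw [hom_p X hXu, (hdp X hXu).1 hXp])
    rw [← KeislerMeasure.marginal_toFun, (om.marginal Sum.inr).toFun_eq_dirac_of_forall_mem hq hY,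
      dq.toFun_eq_dirac_of_forall_mem (fun s hs => (hdq s (q.definable_of_mem s hs)).1 hs) hY]
end

section
/- Let A ⊆ B ⊆ M be parameter sets and μ ∈ 𝔐_x(M), ν ∈ 𝔐_y(M) global Keisler measures. If μ ≥_{E,A} ν, then μ ≥_{E,B} ν. -/
open FirstOrder

/-
Extend `λ` and `μ ∘ π_x` jointly to a global Keisler measure `ω` in `xy` by the M. Riesz
extension theorem applied to the cone of nonnegative combinations of indicator functions.
The positivity it requires reads: if `f(x, y) + g(x) ≥ 0` with `f` an `A`-definable and `g` a
global simple function, then `λ(f) + μ(g) ≥ 0`. This holds because `h(x) := min_y f(x, y)` is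
again an `A`-definable simple function (definable sets are closed under projection), so
`λ(f) ≥ λ(h ∘ π_x) = μ(h) ≥ -μ(g)`. Then `ω|_B` witnesses `μ ≥_{E,B} ν`, since
`E(ω|_B, μ) ⊆ E(λ, μ)`.
-/

open Set

section Extension

variable {W ι : Type*}

theorem neg_sum_abs_le_linearCombination_indicator (u : ι → Set W) (l : ι →₀ ℝ) (x : W) :
    -∑ i ∈ l.support, |l i| ≤
      Finsupp.linearCombination ℝ (fun i => (u i).indicator (1 : W → ℝ)) l x := by
  simp only [Finsupp.linearCombination_apply, Finsupp.sum, Finset.sum_apply, Pi.smul_apply,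
    smul_eq_mul, ← Finset.sum_neg_distrib]
  refine Finset.sum_le_sum fun i _ => ?_
  by_cases hx : x ∈ u i <;> simp [hx, neg_abs_le]

theorem exists_nonneg_linear_extension (u : ι → Set W) (w : ι → ℝ) {i₀ : ι} (hu₀ : u i₀ = univ)
    (hpos : ∀ l : ι →₀ ℝ, 0 ≤ Finsupp.linearCombination ℝ (fun i => (u i).indicator (1 : W → ℝ)) l →
      0 ≤ Finsupp.linearCombination ℝ w l) :
    ∃ g : (ι ⊕ Set W →₀ ℝ) →ₗ[ℝ] ℝ, (∀ i, g (Finsupp.single (Sum.inl i) 1) = w i) ∧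
      ∀ l, 0 ≤ Finsupp.linearCombination ℝ (fun j => (Sum.elim u id j).indicator (1 : W → ℝ)) l →
        0 ≤ g l := by
  classical
  let T := Finsupp.linearCombination ℝ (fun j => (Sum.elim u id j).indicator (1 : W → ℝ))
  let K : PointedCone ℝ (ι ⊕ Set W →₀ ℝ) :=
    (PointedCone.positive ℝ (W → ℝ)).comap (T.restrictScalars _)
  let f : (ι ⊕ Set W →₀ ℝ) →ₗ.[ℝ] ℝ :=
    ⟨LinearMap.range (Finsupp.lmapDomain ℝ ℝ Sum.inl),
      (Finsupp.linearCombination ℝ (Sum.elim w 0)).comp (Submodule.subtype _)⟩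
  have nonneg : ∀ x : f.domain, (x : ι ⊕ Set W →₀ ℝ) ∈ K → 0 ≤ f x := by
    rintro ⟨_, l, rfl⟩ hl
    simpa [f, Finsupp.linearCombination_mapDomain] using
      hpos l (by simpa [K, T, Finsupp.linearCombination_mapDomain, Function.comp_def] using hl)
  -- every combination of indicators is bounded, so a constant from the domain of `f` dominates it
  have dense : ∀ y, ∃ x : f.domain, (x : ι ⊕ Set W →₀ ℝ) + y ∈ K := by
    intro y
    set C := ∑ i ∈ y.support, |y i|
    refine ⟨⟨_, Finsupp.single i₀ C, rfl⟩, fun z => ?_⟩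
    have hC : T (Finsupp.lmapDomain ℝ ℝ Sum.inl (Finsupp.single i₀ C)) z = C := by
      simp [T, hu₀]
    change 0 ≤ T (Finsupp.lmapDomain ℝ ℝ Sum.inl (Finsupp.single i₀ C) + y) z
    rw [map_add, Pi.add_apply, hC]
    linarith [neg_sum_abs_le_linearCombination_indicator (Sum.elim u id) y z]
  obtain ⟨g, hgf, hg⟩ := riesz_extension K f nonneg dense
  refine ⟨g, fun i => ?_, fun l hl => hg l hl⟩
  simpa [f] using hgf ⟨_, Finsupp.single i 1, rfl⟩

theorem exists_additive_extension (u : ι → Set W) (w : ι → ℝ) {i₀ : ι}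
    (hu₀ : u i₀ = univ) (hw₀ : w i₀ = 1)
    (hpos : ∀ l : ι →₀ ℝ, 0 ≤ Finsupp.linearCombination ℝ (fun i => (u i).indicator (1 : W → ℝ)) l →
      0 ≤ Finsupp.linearCombination ℝ w l) :
    ∃ m : Set W → ℝ, m univ = 1 ∧ (∀ s, 0 ≤ m s) ∧ (∀ s, m sᶜ = 1 - m s) ∧
      (∀ s t, m (s ∪ t) = m s + m t - m (s ∩ t)) ∧ ∀ i, m (u i) = w i := by
  obtain ⟨g, hgw, hg⟩ := exists_nonneg_linear_extension u w hu₀ hpos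
  set T := Finsupp.linearCombination ℝ (fun j => (Sum.elim u id j).indicator (1 : W → ℝ))
  have hT : ∀ l l', T l = T l' → g l = g l' := by
    intro l l' h
    have h₁ := hg (l - l') (by simp [h])
    have h₂ := hg (l' - l) (by simp [h])
    simp only [map_sub] at h₁ h₂
    linarith
  have T_single (s : Set W) : T (Finsupp.single (Sum.inr s) 1) = s.indicator 1 := by simp [T]
  let m : Set W → ℝ := fun s => g (Finsupp.single (Sum.inr s) 1)
  have hm : ∀ i, m (u i) = w i := fun i =>
    (hT _ (Finsupp.single (Sum.inl i) 1) (by simp [T])).trans (hgw i)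
  have hm_univ : m univ = 1 := hu₀ ▸ hw₀ ▸ hm i₀
  refine ⟨m, hm_univ, fun s => hg _ ?_, fun s => ?_, fun s t => ?_, hm⟩
  · rw [T_single]
    exact fun x => Set.indicator_nonneg (fun _ _ => zero_le_one) x
  · have h := hT (Finsupp.single (Sum.inr sᶜ) 1 + Finsupp.single (Sum.inr s) 1)
      (Finsupp.single (Sum.inr univ) 1)
      (by rw [map_add, T_single, T_single, T_single, indicator_compl_add_self, indicator_univ])
    rw [map_add] at h
    linarith
  · have h := hT (Finsupp.single (Sum.inr (s ∪ t)) 1 + Finsupp.single (Sum.inr (s ∩ t)) 1)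
      (Finsupp.single (Sum.inr s) 1 + Finsupp.single (Sum.inr t) 1)
      (by rw [map_add, map_add, T_single, T_single, T_single, T_single,
        indicator_union_add_inter])
    rw [map_add, map_add] at h
    linarith

end Extension

theorem linearCombination_eq_sum_toLeft_add_sum_toRight {κ₁ κ₂ E : Type*} [AddCommMonoid E]
    [Module ℝ E] (v : κ₁ ⊕ κ₂ → E) (l : κ₁ ⊕ κ₂ →₀ ℝ) :
    Finsupp.linearCombination ℝ v l = ∑ i ∈ l.support.toLeft, l (Sum.inl i) • v (Sum.inl i) +
      ∑ j ∈ l.support.toRight, l (Sum.inr j) • v (Sum.inr j) := by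
  rw [Finsupp.linearCombination_apply, Finsupp.sum, Finset.sum_sum_eq_sum_toLeft_add_sum_toRight]

section Atoms

variable {ι W : Type*}

open Classical in
noncomputable def pattern (T : Finset ι) (u : ι → Set W) (x : W) : Finset ι := {i ∈ T | x ∈ u i}

def atom (T : Finset ι) (u : ι → Set W) (S : Finset ι) : Set W := {x | pattern T u x = S}

variable {T : Finset ι} {u : ι → Set W}

theorem mem_pattern {x : W} {i : ι} : i ∈ pattern T u x ↔ i ∈ T ∧ x ∈ u i := by
  classical
  simp [pattern]

theorem pattern_mem_powerset (x : W) : pattern T u x ∈ T.powerset :=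
  Finset.mem_powerset.2 fun _ hi => (mem_pattern.1 hi).1

theorem sum_mul_indicator_eq_sum_pattern (a : ι → ℝ) (x : W) :
    ∑ i ∈ T, a i * (u i).indicator 1 x = ∑ i ∈ pattern T u x, a i := by
  classical
  simp [pattern, Finset.sum_filter, Set.indicator_apply]

theorem sum_mul_indicator_atom (F : Finset ι → ℝ) (x : W) :
    ∑ S ∈ T.powerset, F S * (atom T u S).indicator 1 x = F (pattern T u x) := by
  rw [Finset.sum_eq_single_of_mem _ (pattern_mem_powerset (u := u) x)]
  · simp [atom]
  · intro S _ hS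
    simp [atom, Ne.symm hS]

end Atoms

theorem definable_atom {L : Language} {M : Type*} [L.Structure M] {C : Set M} {γ ι : Type*}
    {T : Finset ι} {u : ι → Set (γ → M)} (hu : ∀ i, C.Definable L (u i)) (S : Finset ι) :
    C.Definable L (atom T u S) := by
  classical
  by_cases hS : S ⊆ T
  · convert definable_biInter_finset (fun i => (show C.Definable L (if i ∈ S then u i else (u i)ᶜ)
      by split_ifs; exacts [hu i, (hu i).compl])) T using 1
    ext x
    simp only [atom, mem_ofPred_eq, Finset.ext_iff, mem_pattern, mem_iInter]
    refine forall_congr' fun i => ?_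
    by_cases hiS : i ∈ S
    · simp [hiS, hS hiS]
    · simp [hiS]
  · convert C.definable_empty (L := L)
    ext x
    simp only [atom, mem_ofPred_eq, mem_empty_iff_false, iff_false]
    rintro rfl
    exact hS (Finset.mem_powerset.1 (pattern_mem_powerset x))

theorem Set.Definable.image_comp_sumInl {L : Language} {M : Type*} [L.Structure M] {A : Set M}
    {α β : Type*} {s : Set (α ⊕ β → M)} (h : A.Definable L s) :
    A.Definable L ((fun g : α ⊕ β → M => g ∘ Sum.inl) '' s) := by
  classical
  rcases isEmpty_or_nonempty (β → M) with hβ | ⟨⟨y₀⟩⟩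
  · convert A.definable_empty (L := L)
    exact image_eq_empty.2 (eq_empty_of_forall_notMem fun z _ => hβ.false (z ∘ Sum.inr))
  obtain ⟨φ, rfl⟩ := h
  -- only the finitely many free variables of `φ` among `β` have to be quantified away
  let F := φ.freeVarFinset
  let f : F → α ⊕ F.toRight
    | ⟨Sum.inl a, _⟩ => Sum.inl a
    | ⟨Sum.inr b, hb⟩ => Sum.inr ⟨b, Finset.mem_toRight.2 hb⟩
  let ψ : L[[A]].Formula (α ⊕ F.toRight) := φ.restrictFreeVar f
  have realize_ψ (z : α ⊕ β → M) (u : F.toRight → M) (hu : ∀ b, u b = z (Sum.inr b)) :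
      ψ.Realize (Sum.elim (z ∘ Sum.inl) u) ↔ φ.Realize z :=
    Language.BoundedFormula.realize_restrictFreeVar (φ := φ) (f := f) z
      (by rintro ⟨a | b, _⟩ <;> simp [f, hu])
  convert Definable.exists_of_finite (A := A) (L := L) (β := F.toRight) ⟨ψ, rfl⟩ using 1
  ext x
  constructor
  · rintro ⟨z, hz, rfl⟩
    exact ⟨fun b => z (Sum.inr b), (realize_ψ z _ fun _ => rfl).2 hz⟩
  · rintro ⟨u, hu⟩
    let z := Sum.elim x fun b => if hb : b ∈ F.toRight then u ⟨b, hb⟩ else y₀ b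
    exact ⟨z, (realize_ψ z u fun b => by simp only [z, Sum.elim_inr, dif_pos b.2]).1 hu,
      Sum.elim_comp_inl _ _⟩

theorem indicator_cyl {M α β : Type*} (f : α → β) (S : Set (α → M)) (z : β → M) :
    (cyl f S).indicator (1 : (β → M) → ℝ) z = S.indicator 1 (z ∘ f) := rfl

namespace KeislerMeasure

variable {L : Language} {M : Type*} [L.Structure M] {C : Set M} {γ : Type*}
  (κ : KeislerMeasure L M C γ)

theorem toFun_empty_s5 : κ.toFun ∅ = 0 := by
  have h := κ.compl' univ C.definable_univ
  rwa [compl_univ, κ.measure_univ, sub_self] at h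

theorem nonempty (κ : KeislerMeasure L M C γ) : Nonempty (γ → M) := by
  by_contra h
  rw [not_nonempty_iff] at h
  have h' : (univ : Set (γ → M)) = ∅ := eq_empty_of_isEmpty univ
  simpa [h', κ.toFun_empty_s5] using κ.measure_univ

theorem toFun_union_of_disjoint {s t : Set (γ → M)} (hs : C.Definable L s)
    (ht : C.Definable L t) (h : Disjoint s t) : κ.toFun (s ∪ t) = κ.toFun s + κ.toFun t := by
  rw [κ.union_inter' s t hs ht, h.inter_eq, κ.toFun_empty_s5, sub_zero]

theorem toFun_biUnion_finset {ι : Type*} (T : Finset ι) {f : ι → Set (γ → M)}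
    (hf : ∀ i, C.Definable L (f i)) (h : (T : Set ι).PairwiseDisjoint f) :
    κ.toFun (⋃ i ∈ T, f i) = ∑ i ∈ T, κ.toFun (f i) := by
  classical
  induction T using Finset.induction_on with
  | empty => simpa using κ.toFun_empty_s5
  | insert a T haT ih =>
    rw [Finset.coe_insert, Set.pairwiseDisjoint_insert] at h
    rw [Finset.set_biUnion_insert, Finset.sum_insert haT, κ.toFun_union_of_disjoint (hf a)
      (definable_biUnion_finset hf T), ih h.1]
    exact Set.disjoint_iUnion₂_right.2 fun i hi => h.2 i hi (ne_of_mem_of_not_mem hi haT).symm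

variable {ι : Type*} {T : Finset ι} {u : ι → Set (γ → M)}

theorem toFun_eq_sum_atom [DecidableEq ι] (hu : ∀ i, C.Definable L (u i)) {i : ι} (hi : i ∈ T) :
    κ.toFun (u i) = ∑ S ∈ T.powerset.filter (i ∈ ·), κ.toFun (atom T u S) := by
  have h : u i = ⋃ S ∈ T.powerset.filter (i ∈ ·), atom T u S := by
    ext x
    simpa [atom, mem_pattern, hi] using fun _ => Finset.mem_powerset.1 (pattern_mem_powerset x)
  rw [h, κ.toFun_biUnion_finset _ (definable_atom hu)]
  exact fun S _ S' _ h => Set.disjoint_left.2 fun x hx hx' => h (hx.symm.trans hx')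

theorem sum_mul_toFun_eq_sum_atom (hu : ∀ i, C.Definable L (u i)) (a : ι → ℝ) :
    ∑ i ∈ T, a i * κ.toFun (u i) = ∑ S ∈ T.powerset, (∑ i ∈ S, a i) * κ.toFun (atom T u S) := by
  classical
  calc ∑ i ∈ T, a i * κ.toFun (u i)
      = ∑ i ∈ T, ∑ S ∈ T.powerset, if i ∈ S then a i * κ.toFun (atom T u S) else 0 := by
        refine Finset.sum_congr rfl fun i hi => ?_
        rw [κ.toFun_eq_sum_atom hu hi, Finset.mul_sum, Finset.sum_filter]
    _ = ∑ S ∈ T.powerset, ∑ i ∈ T, if i ∈ S then a i * κ.toFun (atom T u S) else 0 :=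
        Finset.sum_comm
    _ = ∑ S ∈ T.powerset, (∑ i ∈ S, a i) * κ.toFun (atom T u S) := by
        refine Finset.sum_congr rfl fun S hS => ?_
        rw [← Finset.sum_filter, Finset.filter_mem_eq_inter,
          Finset.inter_eq_right.2 (Finset.mem_powerset.1 hS), Finset.sum_mul]

theorem sum_mul_toFun_nonneg_s5 (hu : ∀ i, C.Definable L (u i)) (a : ι → ℝ)
    (h : ∀ x, 0 ≤ ∑ i ∈ T, a i * (u i).indicator 1 x) : 0 ≤ ∑ i ∈ T, a i * κ.toFun (u i) := by
  rw [κ.sum_mul_toFun_eq_sum_atom hu]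
  refine Finset.sum_nonneg fun S _ => ?_
  rcases (atom T u S).eq_empty_or_nonempty with hS | ⟨x, rfl⟩
  · simp [hS, κ.toFun_empty_s5]
  · exact mul_nonneg (sum_mul_indicator_eq_sum_pattern a x ▸ h x)
      (κ.nonneg' _ (definable_atom hu _))

def restrict {B : Set M} (κ : KeislerMeasure L M C γ) (h : B ⊆ C) : KeislerMeasure L M B γ where
  toFun := κ.toFun
  measure_univ := κ.measure_univ
  nonneg' s hs := κ.nonneg' s (hs.mono h)
  compl' s hs := κ.compl' s (hs.mono h)
  union_inter' s t hs ht := κ.union_inter' s t (hs.mono h) (ht.mono h)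

end KeislerMeasure

theorem exists_definable_fiberwise_min {L : Language} {M : Type*} [L.Structure M] {A : Set M}
    {α β ι : Type*} [Nonempty (β → M)] {T : Finset ι} {s : ι → Set (α ⊕ β → M)}
    (hs : ∀ i, A.Definable L (s i)) (a : ι → ℝ) :
    ∃ (R : Finset (Finset ι) → Set (α → M)) (d : Finset (Finset ι) → ℝ),
      (∀ k, A.Definable L (R k)) ∧
      (∀ z, ∑ k ∈ T.powerset.powerset, d k * (R k).indicator 1 (z ∘ Sum.inl) ≤
        ∑ i ∈ T, a i * (s i).indicator 1 z) ∧
      ∀ x, ∃ z : α ⊕ β → M, z ∘ Sum.inl = x ∧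
        ∑ k ∈ T.powerset.powerset, d k * (R k).indicator 1 x =
          ∑ i ∈ T, a i * (s i).indicator 1 z := by
  classical
  let c : Finset ι → ℝ := fun S => ∑ i ∈ S, a i
  let Q : Finset ι → Set (α → M) := fun S => (· ∘ Sum.inl) '' atom T s S
  -- `pattern T.powerset Q x` lists the atoms of `s` meeting the fibre over `x`,
  -- so `d (pattern T.powerset Q x)` is the minimum of the simple function on that fibre
  let d : Finset (Finset ι) → ℝ := fun 𝒮 => ⨅ S : 𝒮, c S
  have mem_pattern_Q (z : α ⊕ β → M) : pattern T s z ∈ pattern T.powerset Q (z ∘ Sum.inl) :=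
    mem_pattern.2 ⟨pattern_mem_powerset z, show z ∘ Sum.inl ∈ Q _ from ⟨z, rfl, rfl⟩⟩
  refine ⟨atom T.powerset Q, d,
    definable_atom fun S => (definable_atom hs S).image_comp_sumInl, fun z => ?_, fun x => ?_⟩
  · rw [sum_mul_indicator_atom, sum_mul_indicator_eq_sum_pattern]
    exact ciInf_le (f := fun S : pattern T.powerset Q (z ∘ Sum.inl) => c S)
      (Set.finite_range _).bddBelow ⟨_, mem_pattern_Q z⟩
  · have : Nonempty (pattern T.powerset Q x) :=
      ⟨_, mem_pattern_Q (Sum.elim x (Classical.arbitrary _))⟩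
    obtain ⟨⟨S, hS⟩, hmin⟩ :=
      exists_eq_ciInf_of_finite (f := fun S : pattern T.powerset Q x => c S)
    obtain ⟨-, z, hz, rfl⟩ := mem_pattern.1 hS
    refine ⟨z, rfl, ?_⟩
    rw [sum_mul_indicator_atom, sum_mul_indicator_eq_sum_pattern, hz]
    exact hmin.symm

theorem sum_mul_toFun_add_sum_mul_toFun_nonneg {L : Language} {M : Type*} [L.Structure M]
    {A : Set M} {α β : Type*} (lam : KeislerMeasure L M A (α ⊕ β))
    (mu : KeislerMeasure L M univ α)
    (hmarg : ∀ X : Set (α → M), A.Definable L X → lam.toFun (cyl Sum.inl X) = mu.toFun X)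
    {ι κ : Type*} {T₁ : Finset ι} {T₂ : Finset κ} {s : ι → Set (α ⊕ β → M)}
    (hs : ∀ i, A.Definable L (s i)) {X : κ → Set (α → M)} (hX : ∀ j, univ.Definable L (X j))
    (a : ι → ℝ) (b : κ → ℝ)
    (h : ∀ z : α ⊕ β → M, 0 ≤ ∑ i ∈ T₁, a i * (s i).indicator 1 z +
      ∑ j ∈ T₂, b j * (X j).indicator 1 (z ∘ Sum.inl)) :
    0 ≤ ∑ i ∈ T₁, a i * lam.toFun (s i) + ∑ j ∈ T₂, b j * mu.toFun (X j) := by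
  have : Nonempty (β → M) := ⟨fun b => lam.nonempty.some (Sum.inr b)⟩
  obtain ⟨R, d, hR, h_le, h_attained⟩ := exists_definable_fiberwise_min (T := T₁) hs a
  set 𝒯 := T₁.powerset.powerset
  have h_lam := lam.sum_mul_toFun_nonneg_s5 (T := T₁.disjSum 𝒯)
    (u := Sum.elim s fun k => cyl Sum.inl (R k))
    (by rintro (i | k); exacts [hs i, (hR k).preimage_comp Sum.inl]) (Sum.elim a fun k => -d k)
    fun z => by
      simpa [Finset.sum_disjSum, indicator_cyl, sub_eq_add_neg] using h_le z
  have h_mu := mu.sum_mul_toFun_nonneg_s5 (T := 𝒯.disjSum T₂) (u := Sum.elim R X)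
    (by rintro (k | j); exacts [(hR k).mono (subset_univ A), hX j]) (Sum.elim d b)
    fun x => by
      obtain ⟨z, rfl, hz⟩ := h_attained x
      simpa [Finset.sum_disjSum, hz] using h z
  simp only [Finset.sum_disjSum, Sum.elim_inl, Sum.elim_inr, hmarg _ (hR _), neg_mul,
    Finset.sum_neg_distrib] at h_lam h_mu
  linarith

theorem extSpace_nonempty {L : Language} {M : Type*} [L.Structure M] {A : Set M} {α β : Type*}
    (lam : KeislerMeasure L M A (α ⊕ β)) (mu : KeislerMeasure L M univ α)
    (hmarg : ∀ X : Set (α → M), A.Definable L X → lam.toFun (cyl Sum.inl X) = mu.toFun X) :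
    (extSpace L A lam mu).Nonempty := by
  let ι := {s : Set (α ⊕ β → M) // A.Definable L s} ⊕ {X : Set (α → M) // univ.Definable L X}
  obtain ⟨m, h_univ, h_nonneg, h_compl, h_union, hm⟩ := exists_additive_extension (ι := ι)
    (Sum.elim (·.1) (cyl Sum.inl ·.1)) (Sum.elim (lam.toFun ·.1) (mu.toFun ·.1))
    (i₀ := Sum.inl ⟨univ, A.definable_univ⟩) rfl lam.measure_univ fun l hl => by
      rw [linearCombination_eq_sum_toLeft_add_sum_toRight]
      refine sum_mul_toFun_add_sum_mul_toFun_nonneg lam mu hmarg (·.2) (·.2) _ _ fun z => ?_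
      have := hl z
      rw [linearCombination_eq_sum_toLeft_add_sum_toRight] at this
      simpa [Finset.sum_apply, indicator_cyl] using this
  exact ⟨⟨m, h_univ, fun s _ => h_nonneg s, fun s _ => h_compl s, fun s t _ _ => h_union s t⟩,
    fun s hs => hm (Sum.inl ⟨s, hs⟩), fun X hX => hm (Sum.inr ⟨X, hX⟩)⟩

theorem extSpace_restrict_subset {L : Language} {M : Type*} [L.Structure M] {A B : Set M}
    (hAB : A ⊆ B) {α β : Type*} {lam : KeislerMeasure L M A (α ⊕ β)}
    {mu : KeislerMeasure L M univ α} {om₀ : KeislerMeasure L M univ (α ⊕ β)}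
    (h₀ : om₀ ∈ extSpace L A lam mu) :
    extSpace L B (om₀.restrict (subset_univ B)) mu ⊆ extSpace L A lam mu :=
  fun _ ⟨hB, hmu⟩ => ⟨fun s hs => (hB s (hs.mono hAB)).trans (h₀.1 s hs), hmu⟩

/-- Extension domination is preserved when the parameter set is enlarged:
if `A ⊆ B` and `μ ≥_{E,A} ν`, then `μ ≥_{E,B} ν`. -/
theorem extDom_mono {L : FirstOrder.Language} {M : Type*} [L.Structure M]
    {A B : Set M} (hAB : A ⊆ B) {α β : Type*}
    (mu : KeislerMeasure L M (Set.univ : Set M) α)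
    (nu : KeislerMeasure L M (Set.univ : Set M) β)
    (h : ExtDomOver L A mu nu) : ExtDomOver L B mu nu := by
  obtain ⟨lam, hmarg, hdom⟩ := h
  obtain ⟨om₀, hom₀⟩ := extSpace_nonempty lam mu hmarg
  exact ⟨om₀.restrict (subset_univ B), fun X hX => hom₀.2 X (hX.mono (subset_univ B)),
    fun om hom => hdom om (extSpace_restrict_subset hAB hom₀ hom)⟩
end

section
/- Let A ⊆ M, λ₁ ∈ 𝔐_xy(A) and λ₂ ∈ 𝔐_yz(A) be Keisler measures with π_y(λ₁) = π_y(λ₂). Then there exists λ₃ ∈ 𝔐_xyz(A) such that π_xy(λ₃) = λ₁ and π_yz(λ₃) = λ₂. -/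
open FirstOrder

/-!
Hahn–Banach. On bounded functions `f` on `M^{xyz}` the functional
`N f = inf {Σ aᵢ λ₁(Sᵢ) + Σ bⱼ λ₂(Tⱼ) | f ≤ Σ aᵢ 1_{Sᵢ × M^z} + Σ bⱼ 1_{M^x × Tⱼ}}`
is sublinear, so some linear `g` lies below it. Then `g(1_{S × M^z}) ≤ λ₁(S)` and the same
bound for `Sᶜ` force equality, likewise for `λ₂`, and `U ↦ g(1_U)` is the amalgam.

The content is that `N` never takes the value `-∞`: if `c ≤ F(x,y) + G(y,z)` for all `x, y, z`, then
`c ≤ ∫ F dλ₁ + ∫ G dλ₂`. The function `u(y) = inf_x F(x,y)` is again a definable simple function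
(a formula has finitely many free variables, so `∃ x` is definable), `u(y) ≤ F(x,y)` and
`c - u(y) ≤ G(y,z)`; integrating, `∫ F dλ₁ + ∫ G dλ₂ ≥ ∫ u + ∫ (c - u) = c`, both integrals
being taken against the common marginal on `y`.
-/

open FirstOrder FirstOrder.Language Set
open scoped lp ENNReal Pointwise

section

variable {L : FirstOrder.Language} {M : Type*} [L.Structure M] {A : Set M}

theorem Set.Definable.exists_sumElim {α β : Type*} {S : Set (α ⊕ β → M)}
    (hS : A.Definable L S) : A.Definable L {y : β → M | ∃ x : α → M, Sum.elim x y ∈ S} := by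
  classical
  rcases isEmpty_or_nonempty (α → M) with hα | ⟨⟨x₀⟩⟩
  · simp
  obtain ⟨φ, rfl⟩ := hS
  let F : Finset α := φ.freeVarFinset.preimage Sum.inl Sum.inl_injective.injOn
  let r : φ.freeVarFinset → β ⊕ F
    | ⟨Sum.inl a, ha⟩ => Sum.inr ⟨a, Finset.mem_preimage.mpr ha⟩
    | ⟨Sum.inr b, _⟩ => Sum.inl b
  let ψ : L[[A]].Formula (β ⊕ F) := φ.restrictFreeVar r
  -- `φ` only mentions the finitely many variables `F` of `α`, so `∃ x` reduces to `∃ x : F → M`.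
  have hψ : ∀ (x : α → M) (y : β → M),
      ψ.Realize (Sum.elim y fun a => x a) ↔ φ.Realize (Sum.elim x y) := fun x y =>
    BoundedFormula.realize_restrictFreeVar _ fun ⟨v, _⟩ => by cases v <;> rfl
  convert Definable.exists_of_finite (L := L) (A := A) ⟨ψ, rfl⟩ using 1
  ext y
  constructor
  · rintro ⟨x, hx⟩
    exact ⟨fun a => x a, (hψ x y).mpr hx⟩
  · rintro ⟨x', hx'⟩
    refine ⟨fun a => if h : a ∈ F then x' ⟨a, h⟩ else x₀ a, (hψ _ y).mp ?_⟩
    convert hx' using 3 with a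
    simp

variable (L A) in
structure IsDefinableSimpleFunc {δ X : Type*} (f : (δ → M) → X) : Prop where
  finite_range : (range f).Finite
  definable_fiber : ∀ t, A.Definable L (f ⁻¹' {t})

namespace IsDefinableSimpleFunc

variable {δ X Y : Type*} {f : (δ → M) → X}

theorem definable_preimage (hf : IsDefinableSimpleFunc L A f) (T : Set X) :
    A.Definable L (f ⁻¹' T) := by
  have := (hf.finite_range.inter_of_left T).to_subtype
  rw [show f ⁻¹' T = ⋃ t : ↥(range f ∩ T), f ⁻¹' {t.1} by ext; simp]
  exact definable_iUnion_of_finite fun t => hf.definable_fiber t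

theorem comp (hf : IsDefinableSimpleFunc L A f) (g : X → Y) :
    IsDefinableSimpleFunc L A (g ∘ f) where
  finite_range := range_comp g f ▸ hf.finite_range.image g
  definable_fiber t := hf.definable_preimage (g ⁻¹' {t})

theorem of_finite [Finite X] (hf : ∀ t, A.Definable L (f ⁻¹' {t})) :
    IsDefinableSimpleFunc L A f :=
  ⟨toFinite _, hf⟩

end IsDefinableSimpleFunc

section IndicatorSum

variable {δ : Type*}

noncomputable def indicatorSum {ι : Type*} [Fintype ι] (S : ι → Set (δ → M)) (a : ι → ℝ)
    (w : δ → M) : ℝ :=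
  ∑ i, (S i).indicator (fun _ => a i) w

theorem indicatorSum_append {n n' : ℕ} (S : Fin n → Set (δ → M)) (S' : Fin n' → Set (δ → M))
    (a : Fin n → ℝ) (a' : Fin n' → ℝ) :
    indicatorSum (Fin.append S S') (Fin.append a a') = indicatorSum S a + indicatorSum S' a' := by
  ext w
  simp [indicatorSum, Fin.sum_univ_add]

theorem indicatorSum_smul {ι : Type*} [Fintype ι] (S : ι → Set (δ → M)) (a : ι → ℝ) (c : ℝ) :
    indicatorSum S (c • a) = c • indicatorSum S a := by
  ext w
  simp only [indicatorSum, Pi.smul_apply, smul_eq_mul, Finset.mul_sum]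
  exact Finset.sum_congr rfl fun i _ => indicator_mul_right _ (fun _ => c) _

theorem isDefinableSimpleFunc_indicatorSum {ι : Type*} [Fintype ι] {S : ι → Set (δ → M)}
    (hS : ∀ i, A.Definable L (S i)) (a : ι → ℝ) :
    IsDefinableSimpleFunc L A (indicatorSum S a) := by
  classical
  have hpattern : IsDefinableSimpleFunc L A (fun w i => w ∈ S i) := .of_finite fun σ => by
    have hfiber : (fun w i => w ∈ S i) ⁻¹' {σ} = ⋂ i, {w | w ∈ S i ↔ σ i} := by
      ext
      simp [funext_iff]
    rw [hfiber]
    refine definable_iInter_of_finite fun i => ?_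
    by_cases h : σ i
    · simpa [h] using hS i
    · simpa [h, compl_def] using (hS i).compl
  convert hpattern.comp (fun σ => ∑ i, if σ i then a i else 0) using 1
  ext w
  simp [indicatorSum, indicator_apply]

end IndicatorSum

theorem IsDefinableSimpleFunc.iInf_sumElim {α β : Type*} [Nonempty (α → M)]
    {F : (α ⊕ β → M) → ℝ} (hF : IsDefinableSimpleFunc L A F) :
    IsDefinableSimpleFunc L A (fun y => ⨅ x, F (Sum.elim x y)) := by
  have hfin : ∀ y, (range fun x => F (Sum.elim x y)).Finite := fun y =>
    hF.finite_range.subset (range_comp_subset_range _ F)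
  have attained : ∀ y, ⨅ x, F (Sum.elim x y) ∈ range fun x => F (Sum.elim x y) := fun y =>
    (range_nonempty _).csInf_mem (hfin y)
  have hle : ∀ x y, ⨅ x, F (Sum.elim x y) ≤ F (Sum.elim x y) := fun x y =>
    ciInf_le (hfin y).bddBelow x
  refine ⟨hF.finite_range.subset (range_subset_iff.mpr fun y =>
    range_comp_subset_range _ F (attained y)), fun r => ?_⟩
  have hfiber : (fun y => ⨅ x, F (Sum.elim x y)) ⁻¹' {r} =
      {y | ∃ x, Sum.elim x y ∈ F ⁻¹' {r}} ∩ {y | ∃ x, Sum.elim x y ∈ F ⁻¹' Iio r}ᶜ := by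
    ext y
    simp only [mem_preimage, mem_singleton_iff, mem_inter_iff, mem_ofPred_eq, mem_compl_iff,
      mem_Iio, not_exists, not_lt]
    constructor
    · rintro rfl
      exact ⟨attained y, fun x => hle x y⟩
    · rintro ⟨⟨x, rfl⟩, hge⟩
      exact le_antisymm (hle x y) (le_ciInf hge)
  rw [hfiber]
  exact (hF.definable_fiber r).exists_sumElim.inter (hF.definable_preimage _).exists_sumElim.compl

namespace KeislerMeasure

variable {δ : Type*} (μ : KeislerMeasure L M A δ)

noncomputable def simpleIntegral {ι : Type*} [Fintype ι] (S : ι → Set (δ → M)) (a : ι → ℝ) :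
    ℝ :=
  ∑ i, a i * μ.toFun (S i)

theorem simpleIntegral_append {n n' : ℕ} (S : Fin n → Set (δ → M)) (S' : Fin n' → Set (δ → M))
    (a : Fin n → ℝ) (a' : Fin n' → ℝ) :
    μ.simpleIntegral (Fin.append S S') (Fin.append a a') =
      μ.simpleIntegral S a + μ.simpleIntegral S' a' := by
  simp [simpleIntegral, Fin.sum_univ_add]

theorem simpleIntegral_smul {ι : Type*} [Fintype ι] (S : ι → Set (δ → M)) (a : ι → ℝ) (c : ℝ) :
    μ.simpleIntegral S (c • a) = c * μ.simpleIntegral S a := by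
  simp [simpleIntegral, Finset.mul_sum, mul_assoc]

theorem toFun_empty_s7 : μ.toFun ∅ = 0 := by
  have h := μ.compl' univ definable_univ
  rwa [compl_univ, μ.measure_univ, sub_self] at h

theorem nonempty_s7 (μ : KeislerMeasure L M A δ) : Nonempty (δ → M) := by
  by_contra h
  have h₁ := μ.measure_univ
  rw [univ_eq_empty_iff.mpr (not_nonempty_iff.mp h), toFun_empty_s7] at h₁
  exact zero_ne_one h₁

theorem toFun_union {s t : Set (δ → M)} (hs : A.Definable L s) (ht : A.Definable L t)
    (hst : Disjoint s t) : μ.toFun (s ∪ t) = μ.toFun s + μ.toFun t := by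
  rw [μ.union_inter' s t hs ht, hst.inter_eq, toFun_empty_s7, sub_zero]

theorem toFun_inter_add_toFun_diff {s t : Set (δ → M)} (hs : A.Definable L s)
    (ht : A.Definable L t) : μ.toFun (s ∩ t) + μ.toFun (s \ t) = μ.toFun s := by
  rw [← μ.toFun_union (hs.inter ht) (hs.sdiff ht) disjoint_sdiff_inter.symm, inter_union_sdiff]

theorem toFun_eq_sum_inter_preimage {X : Type*} {P : (δ → M) → X}
    (hP : ∀ t, A.Definable L (P ⁻¹' {t})) {R : Finset X} (hR : ∀ w, P w ∈ R)
    {s : Set (δ → M)} (hs : A.Definable L s) :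
    μ.toFun s = ∑ t ∈ R, μ.toFun (s ∩ P ⁻¹' {t}) := by
  classical
  have hsum : ∀ R' : Finset X, μ.toFun (s ∩ P ⁻¹' R') = ∑ t ∈ R', μ.toFun (s ∩ P ⁻¹' {t}) := by
    intro R'
    induction R' using Finset.induction_on with
    | empty => simp [toFun_empty_s7]
    | insert t R' ht ih =>
      have hdef : A.Definable L (P ⁻¹' R') := by
        rw [← biUnion_preimage_singleton]
        exact definable_biUnion_finset hP R'
      rw [Finset.sum_insert ht, ← ih, ← μ.toFun_union (hs.inter (hP t)) (hs.inter hdef)]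
      · rw [Finset.coe_insert, insert_eq, preimage_union, inter_union_distrib_left]
      · refine (Disjoint.preimage P ?_).inter_right' s |>.inter_left' s
        simpa using ht
  rw [← hsum, preimage_eq_univ_iff.mpr fun _ ⟨w, hw⟩ => hw ▸ hR w, inter_univ]

theorem mul_toFun_le_sum {ι : Type*} {S : ι → Set (δ → M)} (hS : ∀ i, A.Definable L (S i))
    (a : ι → ℝ) (s : Finset ι) {U : Set (δ → M)} (hU : A.Definable L U) {v : ℝ}
    (hv : ∀ w ∈ U, v ≤ ∑ i ∈ s, (S i).indicator (fun _ => a i) w) :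
    v * μ.toFun U ≤ ∑ i ∈ s, a i * μ.toFun (S i ∩ U) := by
  classical
  induction s using Finset.induction_on generalizing U v with
  | empty =>
    rcases U.eq_empty_or_nonempty with rfl | ⟨w, hw⟩
    · simp [toFun_empty_s7]
    · simpa using mul_nonpos_of_nonpos_of_nonneg (by simpa using hv w hw) (μ.nonneg' U hU)
  | insert j s hj ih =>
    have h₁ := ih (hU.inter (hS j)) (v := v - a j) fun w ⟨hwU, hwS⟩ => by
      have := hv w hwU
      rw [Finset.sum_insert hj, indicator_of_mem hwS] at this
      linarith
    have h₂ := ih (hU.sdiff (hS j)) (v := v) fun w ⟨hwU, hwS⟩ => by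
      simpa [Finset.sum_insert hj, indicator_of_notMem hwS] using hv w hwU
    have hsplit : ∀ i, μ.toFun (S i ∩ (U ∩ S j)) + μ.toFun (S i ∩ (U \ S j)) =
        μ.toFun (S i ∩ U) := fun i => by
      rw [← inter_assoc, ← inter_sdiff_assoc]
      exact μ.toFun_inter_add_toFun_diff ((hS i).inter hU) (hS j)
    rw [Finset.sum_insert hj, ← μ.toFun_inter_add_toFun_diff hU (hS j), inter_comm (S j)]
    calc v * (μ.toFun (U ∩ S j) + μ.toFun (U \ S j))
        = (v - a j) * μ.toFun (U ∩ S j) + v * μ.toFun (U \ S j) + a j * μ.toFun (U ∩ S j) := by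
          ring
      _ ≤ a j * μ.toFun (U ∩ S j) + ∑ i ∈ s, a i * μ.toFun (S i ∩ U) := by
          simp only [← hsplit, mul_add, Finset.sum_add_distrib] at h₁ h₂ ⊢
          linarith

theorem sum_mul_toFun_preimage_le_simpleIntegral {X ι : Type*} [Fintype ι] {P : (δ → M) → X}
    (hP : ∀ t, A.Definable L (P ⁻¹' {t})) {R : Finset X} (hR : ∀ w, P w ∈ R) (v : X → ℝ)
    {S : ι → Set (δ → M)} (hS : ∀ i, A.Definable L (S i)) (a : ι → ℝ)
    (hle : ∀ w, v (P w) ≤ indicatorSum S a w) :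
    ∑ t ∈ R, v t * μ.toFun (P ⁻¹' {t}) ≤ μ.simpleIntegral S a :=
  calc ∑ t ∈ R, v t * μ.toFun (P ⁻¹' {t})
      ≤ ∑ t ∈ R, ∑ i, a i * μ.toFun (S i ∩ P ⁻¹' {t}) :=
        Finset.sum_le_sum fun t _ =>
          μ.mul_toFun_le_sum hS a _ (hP t) fun w hw => (congrArg v hw).symm.trans_le (hle w)
    _ = μ.simpleIntegral S a := by
        rw [Finset.sum_comm]
        exact Finset.sum_congr rfl fun i _ => by
          rw [← Finset.mul_sum, ← μ.toFun_eq_sum_inter_preimage hP hR (hS i)]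

end KeislerMeasure

section IndicatorLp

variable {W : Type*}

noncomputable def indicatorLp (U : Set W) : ℓ^∞(W, ℝ) :=
  ⟨U.indicator 1, memℓp_infty ⟨1, by
    rintro _ ⟨w, rfl⟩
    by_cases hw : w ∈ U <;> simp [hw]⟩⟩

@[simp]
theorem coe_indicatorLp (U : Set W) : ⇑(indicatorLp U) = U.indicator 1 := rfl

theorem indicatorLp_univ : indicatorLp (univ : Set W) = 1 :=
  lp.ext (by rw [coe_indicatorLp, indicator_univ, lp.infty_coeFn_one])

theorem indicatorLp_compl (U : Set W) : indicatorLp Uᶜ = 1 - indicatorLp U :=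
  lp.ext (by rw [lp.coeFn_sub, coe_indicatorLp, coe_indicatorLp, indicator_compl,
    lp.infty_coeFn_one])

theorem indicatorLp_union_add_inter (s t : Set W) :
    indicatorLp (s ∪ t) + indicatorLp (s ∩ t) = indicatorLp s + indicatorLp t :=
  lp.ext (by simp only [lp.coeFn_add, coe_indicatorLp, indicator_union_add_inter])

theorem map_indicatorLp_eq_of_le {g : ℓ^∞(W, ℝ) →ₗ[ℝ] ℝ} (map_one : g 1 = 1)
    {V : Set W} {m : ℝ} (hV : g (indicatorLp V) ≤ m) (hVc : g (indicatorLp Vᶜ) ≤ 1 - m) :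
    g (indicatorLp V) = m := by
  rw [indicatorLp_compl, map_sub, map_one] at hVc
  linarith

end IndicatorLp

noncomputable def KeislerMeasure.ofLinearMap {δ : Type*} (g : ℓ^∞(δ → M, ℝ) →ₗ[ℝ] ℝ)
    (map_one : g 1 = 1) (nonneg : ∀ U, A.Definable L U → 0 ≤ g (indicatorLp U)) :
    KeislerMeasure L M A δ where
  toFun U := g (indicatorLp U)
  measure_univ := by rw [indicatorLp_univ, map_one]
  nonneg' := nonneg
  compl' U _ := by rw [indicatorLp_compl, map_sub, map_one]
  union_inter' s t _ _ := by
    rw [eq_sub_iff_add_eq, ← map_add, indicatorLp_union_add_inter, map_add]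

def SameMarginal {α β γ : Type*} (lam₁ : KeislerMeasure L M A (α ⊕ β))
    (lam₂ : KeislerMeasure L M A (β ⊕ γ)) : Prop :=
  ∀ Y : Set (β → M), A.Definable L Y → lam₁.toFun (cyl Sum.inr Y) = lam₂.toFun (cyl Sum.inl Y)

theorem le_simpleIntegral_add_simpleIntegral {α β γ ι κ : Type*} [Fintype ι] [Fintype κ]
    {lam₁ : KeislerMeasure L M A (α ⊕ β)} {lam₂ : KeislerMeasure L M A (β ⊕ γ)}
    (h : SameMarginal lam₁ lam₂)
    {S : ι → Set (α ⊕ β → M)} (hS : ∀ i, A.Definable L (S i)) (a : ι → ℝ)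
    {T : κ → Set (β ⊕ γ → M)} (hT : ∀ j, A.Definable L (T j)) (b : κ → ℝ) {c : ℝ}
    (hc : ∀ x y z, c ≤ indicatorSum S a (Sum.elim x y) + indicatorSum T b (Sum.elim y z)) :
    c ≤ lam₁.simpleIntegral S a + lam₂.simpleIntegral T b := by
  have : Nonempty (α → M) := lam₁.nonempty_s7.map (· ∘ Sum.inl)
  have hF := isDefinableSimpleFunc_indicatorSum hS a
  set u : (β → M) → ℝ := fun y => ⨅ x, indicatorSum S a (Sum.elim x y)
  have hu : IsDefinableSimpleFunc L A u := hF.iInf_sumElim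
  have u_le : ∀ x y, u y ≤ indicatorSum S a (Sum.elim x y) := fun x y =>
    ciInf_le (hF.finite_range.subset (range_comp_subset_range _ _)).bddBelow x
  have le_u : ∀ y z, c - u y ≤ indicatorSum T b (Sum.elim y z) := fun y z => by
    obtain ⟨x, hx⟩ := (range_nonempty _).csInf_mem
      (hF.finite_range.subset (range_comp_subset_range (fun x => Sum.elim x y) _))
    linarith [hc x y z, show indicatorSum S a (Sum.elim x y) = u y from hx]
  let R := hu.finite_range.toFinset
  let P₁ : (α ⊕ β → M) → ℝ := fun w => u (w ∘ Sum.inr)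
  let P₂ : (β ⊕ γ → M) → ℝ := fun w => u (w ∘ Sum.inl)
  have hP₁ : ∀ t, A.Definable L (P₁ ⁻¹' {t}) := fun t =>
    (hu.definable_fiber t).preimage_comp Sum.inr
  have hP₂ : ∀ t, A.Definable L (P₂ ⁻¹' {t}) := fun t =>
    (hu.definable_fiber t).preimage_comp Sum.inl
  have hR₁ : ∀ w, P₁ w ∈ R := fun w => hu.finite_range.mem_toFinset.mpr (mem_range_self _)
  have hR₂ : ∀ w, P₂ w ∈ R := fun w => hu.finite_range.mem_toFinset.mpr (mem_range_self _)
  have h₁ := lam₁.sum_mul_toFun_preimage_le_simpleIntegral hP₁ hR₁ (fun t => t) hS a fun w => by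
    simpa only [Sum.elim_comp_inl_inr] using u_le (w ∘ Sum.inl) (w ∘ Sum.inr)
  have h₂ := lam₂.sum_mul_toFun_preimage_le_simpleIntegral hP₂ hR₂ (c - ·) hT b fun w => by
    simpa only [Sum.elim_comp_inl_inr] using le_u (w ∘ Sum.inl) (w ∘ Sum.inr)
  have hmarg : ∀ t, lam₂.toFun (P₂ ⁻¹' {t}) = lam₁.toFun (P₁ ⁻¹' {t}) := fun t =>
    (h _ (hu.definable_fiber t)).symm
  have htotal : ∑ t ∈ R, lam₁.toFun (P₁ ⁻¹' {t}) = 1 := by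
    simpa [lam₁.measure_univ] using
      (lam₁.toFun_eq_sum_inter_preimage hP₁ hR₁ definable_univ).symm
  calc c = ∑ t ∈ R, (t + (c - t)) * lam₁.toFun (P₁ ⁻¹' {t}) := by
        simp [← Finset.mul_sum, htotal]
    _ = ∑ t ∈ R, t * lam₁.toFun (P₁ ⁻¹' {t}) + ∑ t ∈ R, (c - t) * lam₂.toFun (P₂ ⁻¹' {t}) := by
        simp only [hmarg, ← Finset.sum_add_distrib, add_mul]
    _ ≤ _ := add_le_add h₁ h₂

theorem exists_linearMap_le_of_sublinear {E : Type*} [AddCommGroup E] [Module ℝ E] (N : E → ℝ)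
    (N_hom : ∀ c : ℝ, 0 < c → ∀ x, N (c • x) = c * N x) (N_add : ∀ x y, N (x + y) ≤ N x + N y) :
    ∃ g : E →ₗ[ℝ] ℝ, ∀ x, g x ≤ N x := by
  have N_zero : N 0 = 0 := by
    have := N_hom 2 two_pos 0
    rw [smul_zero] at this
    linarith
  obtain ⟨g, -, hg⟩ := exists_extension_of_le_sublinear ⊥ N N_hom N_add fun ⟨x, hx⟩ => by
    obtain rfl := (Submodule.mem_bot ℝ).mp hx
    exact (LinearPMap.map_zero _).trans_le N_zero.ge
  exact ⟨g, hg⟩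

section Amalgam

variable {α β γ : Type*} (lam₁ : KeislerMeasure L M A (α ⊕ β))
  (lam₂ : KeislerMeasure L M A (β ⊕ γ))

def upperSums (f : (α ⊕ (β ⊕ γ) → M) → ℝ) : Set ℝ :=
  {r | ∃ (n m : ℕ) (S : Fin n → Set (α ⊕ β → M)) (a : Fin n → ℝ)
    (T : Fin m → Set (β ⊕ γ → M)) (b : Fin m → ℝ),
    (∀ i, A.Definable L (S i)) ∧ (∀ j, A.Definable L (T j)) ∧
    (∀ w, f w ≤ indicatorSum S a (w ∘ Sum.map id Sum.inl) + indicatorSum T b (w ∘ Sum.inr)) ∧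
    r = lam₁.simpleIntegral S a + lam₂.simpleIntegral T b}

noncomputable def upperIntegral (f : ℓ^∞(α ⊕ (β ⊕ γ) → M, ℝ)) : ℝ :=
  sInf (upperSums lam₁ lam₂ f)

variable {lam₁ lam₂} {g : ℓ^∞(α ⊕ (β ⊕ γ) → M, ℝ) →ₗ[ℝ] ℝ}

theorem add_mem_upperSums {f f' : (α ⊕ (β ⊕ γ) → M) → ℝ} {r r' : ℝ}
    (hr : r ∈ upperSums lam₁ lam₂ f) (hr' : r' ∈ upperSums lam₁ lam₂ f') :
    r + r' ∈ upperSums lam₁ lam₂ (f + f') := by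
  obtain ⟨n, m, S, a, T, b, hS, hT, hle, rfl⟩ := hr
  obtain ⟨n', m', S', a', T', b', hS', hT', hle', rfl⟩ := hr'
  refine ⟨n + n', m + m', Fin.append S S', Fin.append a a', Fin.append T T', Fin.append b b',
    Fin.addCases (by simpa using hS ·) (by simpa using hS' ·),
    Fin.addCases (by simpa using hT ·) (by simpa using hT' ·), fun w => ?_, ?_⟩
  · simp only [indicatorSum_append, Pi.add_apply]
    linarith [hle w, hle' w]
  · rw [lam₁.simpleIntegral_append, lam₂.simpleIntegral_append]
    ring

theorem smul_mem_upperSums {c : ℝ} (hc : 0 ≤ c) {f : (α ⊕ (β ⊕ γ) → M) → ℝ} {r : ℝ}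
    (hr : r ∈ upperSums lam₁ lam₂ f) : c * r ∈ upperSums lam₁ lam₂ (c • f) := by
  obtain ⟨n, m, S, a, T, b, hS, hT, hle, rfl⟩ := hr
  refine ⟨n, m, S, c • a, T, c • b, hS, hT, fun w => ?_, ?_⟩
  · simpa only [indicatorSum_smul, Pi.smul_apply, smul_eq_mul, mul_add] using
      mul_le_mul_of_nonneg_left (hle w) hc
  · rw [lam₁.simpleIntegral_smul, lam₂.simpleIntegral_smul, mul_add]

theorem mem_upperSums_of_le {f : (α ⊕ (β ⊕ γ) → M) → ℝ} {C : ℝ} (hf : ∀ w, f w ≤ C) :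
    C ∈ upperSums lam₁ lam₂ f :=
  ⟨1, 0, fun _ => univ, fun _ => C, Fin.elim0, Fin.elim0, fun _ => definable_univ,
    (·.elim0), fun w => by simpa [indicatorSum] using hf w,
    by simp [KeislerMeasure.simpleIntegral, lam₁.measure_univ]⟩

theorem toFun_mem_upperSums_left {S : Set (α ⊕ β → M)} (hS : A.Definable L S) :
    lam₁.toFun S ∈ upperSums lam₁ lam₂ ((cyl (Sum.map id Sum.inl) S).indicator 1) :=
  ⟨1, 0, fun _ => S, fun _ => 1, Fin.elim0, Fin.elim0, fun _ => hS, (·.elim0),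
    fun w => le_of_eq (by simp [indicatorSum]; rfl),
    by simp [KeislerMeasure.simpleIntegral]⟩

theorem toFun_mem_upperSums_right {T : Set (β ⊕ γ → M)} (hT : A.Definable L T) :
    lam₂.toFun T ∈ upperSums lam₁ lam₂ ((cyl Sum.inr T).indicator 1) :=
  ⟨0, 1, Fin.elim0, Fin.elim0, fun _ => T, fun _ => 1, (·.elim0), fun _ => hT,
    fun w => le_of_eq (by simp [indicatorSum]; rfl),
    by simp [KeislerMeasure.simpleIntegral]⟩

theorem le_of_mem_upperSums (h : SameMarginal lam₁ lam₂)
    {f : (α ⊕ (β ⊕ γ) → M) → ℝ} {c r : ℝ} (hc : ∀ w, c ≤ f w)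
    (hr : r ∈ upperSums lam₁ lam₂ f) : c ≤ r := by
  obtain ⟨n, m, S, a, T, b, hS, hT, hle, rfl⟩ := hr
  refine le_simpleIntegral_add_simpleIntegral h hS a hT b fun x y z => ?_
  simpa [Sum.elim_comp_map] using (hc _).trans (hle (Sum.elim x (Sum.elim y z)))

theorem norm_mem_upperSums (f : ℓ^∞(α ⊕ (β ⊕ γ) → M, ℝ)) : ‖f‖ ∈ upperSums lam₁ lam₂ f :=
  mem_upperSums_of_le fun w => le_of_abs_le (lp.norm_apply_le_norm ENNReal.top_ne_zero f w)

theorem bddBelow_upperSums (h : SameMarginal lam₁ lam₂) (f : ℓ^∞(α ⊕ (β ⊕ γ) → M, ℝ)) :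
    BddBelow (upperSums lam₁ lam₂ f) :=
  ⟨-‖f‖, fun _ => le_of_mem_upperSums h fun w =>
    neg_le_of_abs_le (lp.norm_apply_le_norm ENNReal.top_ne_zero f w)⟩

theorem upperIntegral_le (h : SameMarginal lam₁ lam₂) {f : ℓ^∞(α ⊕ (β ⊕ γ) → M, ℝ)} {r : ℝ}
    (hr : r ∈ upperSums lam₁ lam₂ f) : upperIntegral lam₁ lam₂ f ≤ r :=
  csInf_le (bddBelow_upperSums h f) hr

theorem upperIntegral_add_le (h : SameMarginal lam₁ lam₂) (f f' : ℓ^∞(α ⊕ (β ⊕ γ) → M, ℝ)) :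
    upperIntegral lam₁ lam₂ (f + f') ≤ upperIntegral lam₁ lam₂ f + upperIntegral lam₁ lam₂ f' := by
  rw [upperIntegral, upperIntegral, upperIntegral,
    ← csInf_add ⟨_, norm_mem_upperSums f⟩ (bddBelow_upperSums h f) ⟨_, norm_mem_upperSums f'⟩
      (bddBelow_upperSums h f')]
  refine csInf_le_csInf (bddBelow_upperSums h _) ⟨_, add_mem_add (norm_mem_upperSums f)
    (norm_mem_upperSums f')⟩ ?_
  rintro _ ⟨r, hr, r', hr', rfl⟩
  rw [lp.coeFn_add]
  exact add_mem_upperSums hr hr'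

theorem upperIntegral_smul {c : ℝ} (hc : 0 < c) (f : ℓ^∞(α ⊕ (β ⊕ γ) → M, ℝ)) :
    upperIntegral lam₁ lam₂ (c • f) = c * upperIntegral lam₁ lam₂ f := by
  have : upperSums lam₁ lam₂ ⇑(c • f) = c • upperSums lam₁ lam₂ f := by
    ext r
    rw [lp.coeFn_smul, mem_smul_set]
    constructor
    · intro hr
      refine ⟨c⁻¹ * r, ?_, by simp [hc.ne']⟩
      simpa [smul_smul, hc.ne'] using smul_mem_upperSums (inv_nonneg.mpr hc.le) hr
    · rintro ⟨r, hr, rfl⟩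
      exact smul_mem_upperSums hc.le hr
  rw [upperIntegral, upperIntegral, this, Real.sInf_smul_of_nonneg hc.le, smul_eq_mul]

theorem exists_linearMap_le_upperIntegral (h : SameMarginal lam₁ lam₂) :
    ∃ g : ℓ^∞(α ⊕ (β ⊕ γ) → M, ℝ) →ₗ[ℝ] ℝ, ∀ f, g f ≤ upperIntegral lam₁ lam₂ f :=
  exists_linearMap_le_of_sublinear _ (fun _ hc f => upperIntegral_smul hc f)
    (upperIntegral_add_le h)

theorem map_le_of_mem_upperSums (h : SameMarginal lam₁ lam₂)
    (hg : ∀ f, g f ≤ upperIntegral lam₁ lam₂ f) {f : ℓ^∞(α ⊕ (β ⊕ γ) → M, ℝ)} {r : ℝ}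
    (hr : r ∈ upperSums lam₁ lam₂ f) : g f ≤ r :=
  (hg f).trans (upperIntegral_le h hr)

theorem map_one_of_le_upperIntegral (h : SameMarginal lam₁ lam₂)
    (hg : ∀ f, g f ≤ upperIntegral lam₁ lam₂ f) : g 1 = 1 := by
  have h₁ := map_le_of_mem_upperSums h hg (f := 1) (mem_upperSums_of_le (C := 1) fun _ => le_rfl)
  have h₂ := map_le_of_mem_upperSums h hg (f := -1) (mem_upperSums_of_le (C := -1) fun _ => le_rfl)
  rw [map_neg] at h₂
  linarith

theorem map_indicatorLp_nonneg (h : SameMarginal lam₁ lam₂)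
    (hg : ∀ f, g f ≤ upperIntegral lam₁ lam₂ f) (U : Set (α ⊕ (β ⊕ γ) → M)) :
    0 ≤ g (indicatorLp U) := by
  have := map_le_of_mem_upperSums h hg (f := -indicatorLp U) (mem_upperSums_of_le (C := 0) fun w =>
    neg_nonpos.mpr (indicator_nonneg (fun _ _ => zero_le_one) w))
  rw [map_neg] at this
  linarith

theorem map_indicatorLp_cyl_left (h : SameMarginal lam₁ lam₂)
    (hg : ∀ f, g f ≤ upperIntegral lam₁ lam₂ f) {S : Set (α ⊕ β → M)} (hS : A.Definable L S) :
    g (indicatorLp (cyl (Sum.map id Sum.inl) S)) = lam₁.toFun S :=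
  map_indicatorLp_eq_of_le (map_one_of_le_upperIntegral h hg)
    (map_le_of_mem_upperSums h hg (toFun_mem_upperSums_left hS))
    ((map_le_of_mem_upperSums h hg (f := indicatorLp (cyl (Sum.map id Sum.inl) S)ᶜ)
      (toFun_mem_upperSums_left hS.compl)).trans_eq (lam₁.compl' S hS))

theorem map_indicatorLp_cyl_right (h : SameMarginal lam₁ lam₂)
    (hg : ∀ f, g f ≤ upperIntegral lam₁ lam₂ f) {T : Set (β ⊕ γ → M)} (hT : A.Definable L T) :
    g (indicatorLp (cyl Sum.inr T)) = lam₂.toFun T :=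
  map_indicatorLp_eq_of_le (map_one_of_le_upperIntegral h hg)
    (map_le_of_mem_upperSums h hg (toFun_mem_upperSums_right hT))
    ((map_le_of_mem_upperSums h hg (f := indicatorLp (cyl Sum.inr T)ᶜ)
      (toFun_mem_upperSums_right hT.compl)).trans_eq (lam₂.compl' T hT))

end Amalgam

end

/-- Amalgamation of measures over a common marginal: if `λ₁ ∈ 𝔐_{αβ}(A)` and
`λ₂ ∈ 𝔐_{βγ}(A)` satisfy `π_β(λ₁) = π_β(λ₂)`, then there is `λ₃ ∈ 𝔐_{αβγ}(A)` with
`π_{αβ}(λ₃) = λ₁` and `π_{βγ}(λ₃) = λ₂`. -/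
theorem exists_common_amalgam {L : FirstOrder.Language} {M : Type*} [L.Structure M]
    (A : Set M) {α β γ : Type*}
    (lam₁ : KeislerMeasure L M A (α ⊕ β)) (lam₂ : KeislerMeasure L M A (β ⊕ γ))
    (h : ∀ Y : Set (β → M), A.Definable L Y →
      lam₁.toFun (cyl Sum.inr Y) = lam₂.toFun (cyl Sum.inl Y)) :
    ∃ lam₃ : KeislerMeasure L M A (α ⊕ (β ⊕ γ)),
      (∀ S : Set (α ⊕ β → M), A.Definable L S →
        lam₃.toFun (cyl (Sum.map id Sum.inl) S) = lam₁.toFun S) ∧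
      (∀ S : Set (β ⊕ γ → M), A.Definable L S →
        lam₃.toFun (cyl Sum.inr S) = lam₂.toFun S) := by
  obtain ⟨g, hg⟩ := exists_linearMap_le_upperIntegral h
  exact ⟨.ofLinearMap g (map_one_of_le_upperIntegral h hg) fun U _ => map_indicatorLp_nonneg h hg U,
    fun S hS => map_indicatorLp_cyl_left h hg hS, fun T hT => map_indicatorLp_cyl_right h hg hT⟩
end

section
/- Suppose μ ∈ 𝔐_x(M) extension dominates ν ∈ 𝔐_y(M) over A and λ ∈ 𝔐_xy(A) witnesses the domination. Then for every ω ∈ E(λ,μ), every D ∈ L_y(M), and every ε > 0, there exist sets G⁻, G⁺ ∈ 𝔹_xy(A) such that: (1) G⁻ ⊆ M^x × D ⊆ G⁺; (2) ω(G⁺) − ω(G⁻) < ε; and (3) |ω(G⁻) − ν(D)| < ε and |ω(G⁺) − ν(D)| < ε. -/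
/-!
Let `T = M^α × D`. If the inner measure of `T` relative to `𝔹_{αβ}(A)` were smaller than `ω(T)`,
the Łoś–Marczewski extension of `ω|𝔹` to the algebra generated by `𝔹` and `T`, which gives `T` its
inner measure, could be extended further (Zorn's lemma) to a global Keisler measure. That measure
still lies in `E(λ, μ)`, because `𝔹` contains the `A`-definable sets and the cylinders `X × M^β`,
yet it differs from `ω` on `T`, whereas domination forces both to give `T` the value `ν(D)`. So `T`
and, in the same way, its complement are approximated from inside by sets of `𝔹` up to any `ε`.
-/

open FirstOrder

/-- The Boolean subalgebra `𝔹_{αβ}(A)` of `L_{αβ}(M)` generated by the cylinders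
`X × M^β` for globally definable `X ∈ L_α(M)` together with all `A`-definable sets
in `L_{αβ}(A)`. -/
inductive BAlg (L : FirstOrder.Language) (M : Type*) [L.Structure M] (A : Set M)
    (α β : Type*) : Set (α ⊕ β → M) → Prop
  | cylinder (X : Set (α → M)) (hX : (Set.univ : Set M).Definable L X) :
      BAlg L M A α β (cyl Sum.inl X)
  | base (S : Set (α ⊕ β → M)) (hS : A.Definable L S) : BAlg L M A α β S
  | compl (S : Set (α ⊕ β → M)) : BAlg L M A α β S → BAlg L M A α β Sᶜ
  | union (S T : Set (α ⊕ β → M)) :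
      BAlg L M A α β S → BAlg L M A α β T → BAlg L M A α β (S ∪ T)

open Set MeasureTheory

section Charge

variable {X : Type*} {𝒜 ℬ : Set (Set X)} {m : Set X → ℝ} {B D E G S T : Set X}

/-- A finitely additive probability measure (a *charge*) on `𝒜`. -/
structure IsProbCharge (𝒜 : Set (Set X)) (m : Set X → ℝ) : Prop where
  univ_eq : m univ = 1
  nonneg : ∀ s ∈ 𝒜, 0 ≤ m s
  compl_eq : ∀ s ∈ 𝒜, m sᶜ = 1 - m s
  union_eq : ∀ s ∈ 𝒜, ∀ t ∈ 𝒜, m (s ∪ t) = m s + m t - m (s ∩ t)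

namespace IsProbCharge

theorem anti (hm : IsProbCharge ℬ m) (h : 𝒜 ⊆ ℬ) : IsProbCharge 𝒜 m :=
  ⟨hm.univ_eq, fun s hs => hm.nonneg s (h hs), fun s hs => hm.compl_eq s (h hs),
    fun s hs t ht => hm.union_eq s (h hs) t (h ht)⟩

theorem empty_eq (h𝒜 : IsSetAlgebra 𝒜) (hm : IsProbCharge 𝒜 m) : m ∅ = 0 := by
  have := hm.compl_eq univ h𝒜.univ_mem
  rwa [compl_univ, hm.univ_eq, sub_self] at this

theorem le_one (h𝒜 : IsSetAlgebra 𝒜) (hm : IsProbCharge 𝒜 m) (hS : S ∈ 𝒜) : m S ≤ 1 := by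
  linarith [hm.compl_eq S hS, hm.nonneg Sᶜ (h𝒜.compl_mem hS)]

theorem mono (h𝒜 : IsSetAlgebra 𝒜) (hm : IsProbCharge 𝒜 m) (hS : S ∈ 𝒜) (hT : T ∈ 𝒜)
    (hST : S ⊆ T) : m S ≤ m T := by
  have h := hm.union_eq S hS (T \ S) (h𝒜.sdiff_mem hT hS)
  rw [union_sdiff_cancel hST, inter_sdiff_self, hm.empty_eq h𝒜] at h
  linarith [hm.nonneg _ (h𝒜.sdiff_mem hT hS)]

end IsProbCharge

noncomputable def innerMeasure (𝒜 : Set (Set X)) (m : Set X → ℝ) (T : Set X) : ℝ :=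
  sSup (m '' {G | G ∈ 𝒜 ∧ G ⊆ T})

theorem le_innerMeasure (h𝒜 : IsSetAlgebra 𝒜) (hm : IsProbCharge 𝒜 m) (hG : G ∈ 𝒜)
    (hGT : G ⊆ T) : m G ≤ innerMeasure 𝒜 m T := by
  refine le_csSup ⟨1, ?_⟩ ⟨G, ⟨hG, hGT⟩, rfl⟩
  rintro _ ⟨H, ⟨hH, -⟩, rfl⟩
  exact hm.le_one h𝒜 hH

theorem innerMeasure_le (h𝒜 : IsSetAlgebra 𝒜) {c : ℝ} (h : ∀ G ∈ 𝒜, G ⊆ T → m G ≤ c) :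
    innerMeasure 𝒜 m T ≤ c := by
  refine csSup_le ⟨m ∅, ∅, ⟨h𝒜.empty_mem, empty_subset T⟩, rfl⟩ ?_
  rintro _ ⟨G, ⟨hG, hGT⟩, rfl⟩
  exact h G hG hGT

theorem exists_lt_of_lt_innerMeasure (h𝒜 : IsSetAlgebra 𝒜) {c : ℝ}
    (h : c < innerMeasure 𝒜 m T) : ∃ G ∈ 𝒜, G ⊆ T ∧ c < m G := by
  obtain ⟨_, ⟨G, ⟨hG, hGT⟩, rfl⟩, hlt⟩ :=
    exists_lt_of_lt_csSup (⟨m ∅, ∅, ⟨h𝒜.empty_mem, empty_subset T⟩, rfl⟩ :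
      (m '' {G | G ∈ 𝒜 ∧ G ⊆ T}).Nonempty) h
  exact ⟨G, hG, hGT, hlt⟩

theorem innerMeasure_add_le (h𝒜 : IsSetAlgebra 𝒜) {c : ℝ}
    (h : ∀ G ∈ 𝒜, G ⊆ S → ∀ H ∈ 𝒜, H ⊆ T → m G + m H ≤ c) :
    innerMeasure 𝒜 m S + innerMeasure 𝒜 m T ≤ c := by
  suffices innerMeasure 𝒜 m S ≤ c - innerMeasure 𝒜 m T by linarith
  refine innerMeasure_le h𝒜 fun G hG hGS => ?_
  suffices innerMeasure 𝒜 m T ≤ c - m G by linarith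
  exact innerMeasure_le h𝒜 fun H hH hHT => by linarith [h G hG hGS H hH hHT]

variable (h𝒜 : IsSetAlgebra 𝒜) (hm : IsProbCharge 𝒜 m)
include h𝒜 hm

theorem innerMeasure_nonneg : 0 ≤ innerMeasure 𝒜 m T := by
  simpa only [hm.empty_eq h𝒜] using le_innerMeasure h𝒜 hm h𝒜.empty_mem (empty_subset T)

theorem innerMeasure_le_one : innerMeasure 𝒜 m T ≤ 1 :=
  innerMeasure_le h𝒜 fun _ hG _ => hm.le_one h𝒜 hG

theorem innerMeasure_of_mem (hB : B ∈ 𝒜) : innerMeasure 𝒜 m B = m B :=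
  le_antisymm (innerMeasure_le h𝒜 fun _ hG hGB => hm.mono h𝒜 hG hB hGB)
    (le_innerMeasure h𝒜 hm hB subset_rfl)

theorem innerMeasure_union_inter_add (hB : B ∈ 𝒜) (hD : D ∈ 𝒜) :
    innerMeasure 𝒜 m ((B ∪ D) ∩ E) + innerMeasure 𝒜 m ((B ∩ D) ∩ E) =
      innerMeasure 𝒜 m (B ∩ E) + innerMeasure 𝒜 m (D ∩ E) := by
  apply le_antisymm
  · refine innerMeasure_add_le h𝒜 fun G hG hGBD H hH hHBD => ?_
    -- `G` is cut along `B` and `D`, and `H` is added to both halves.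
    have hGH : m G + m H ≤ m (G ∪ H) + m (G ∩ B ∩ D ∪ H) :=
      add_le_add (hm.mono h𝒜 hG (h𝒜.union_mem hG hH) subset_union_left)
        (hm.mono h𝒜 hH (h𝒜.union_mem (h𝒜.inter_mem (h𝒜.inter_mem hG hB) hD) hH)
          subset_union_right)
    have hGB : G ∩ B ∪ H ∈ 𝒜 := h𝒜.union_mem (h𝒜.inter_mem hG hB) hH
    have hGD : G ∩ D ∪ H ∈ 𝒜 := h𝒜.union_mem (h𝒜.inter_mem hG hD) hH
    have hsum := hm.union_eq _ hGB _ hGD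
    have hunion : G ∩ B ∪ H ∪ (G ∩ D ∪ H) = G ∪ H := by
      ext x; have := @hGBD x; have := @hHBD x; simp only [mem_union, mem_inter_iff] at *; tauto
    have hinter : (G ∩ B ∪ H) ∩ (G ∩ D ∪ H) = G ∩ B ∩ D ∪ H := by
      ext x; simp only [mem_union, mem_inter_iff]; tauto
    rw [hunion, hinter] at hsum
    have hleB := le_innerMeasure h𝒜 hm hGB (T := B ∩ E) (by
      rintro x (⟨hxG, hxB⟩ | hxH)
      exacts [⟨hxB, (hGBD hxG).2⟩, ⟨(hHBD hxH).1.1, (hHBD hxH).2⟩])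
    have hleD := le_innerMeasure h𝒜 hm hGD (T := D ∩ E) (by
      rintro x (⟨hxG, hxD⟩ | hxH)
      exacts [⟨hxD, (hGBD hxG).2⟩, ⟨(hHBD hxH).1.2, (hHBD hxH).2⟩])
    linarith
  · refine innerMeasure_add_le h𝒜 fun G hG hGB H hH hHD => ?_
    have hunion := le_innerMeasure h𝒜 hm (h𝒜.union_mem hG hH) (T := (B ∪ D) ∩ E) (by
      rintro x (hx | hx)
      exacts [⟨Or.inl (hGB hx).1, (hGB hx).2⟩, ⟨Or.inr (hHD hx).1, (hHD hx).2⟩])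
    have hinter := le_innerMeasure h𝒜 hm (h𝒜.inter_mem hG hH) (T := (B ∩ D) ∩ E)
      fun x hx => ⟨⟨(hGB hx.1).1, (hHD hx.2).1⟩, (hGB hx.1).2⟩
    linarith [hm.union_eq G hG H hH]

theorem innerMeasure_inter_add_compl_inter (hB : B ∈ 𝒜) :
    innerMeasure 𝒜 m (B ∩ E) + innerMeasure 𝒜 m (Bᶜ ∩ E) = innerMeasure 𝒜 m E := by
  have h := innerMeasure_union_inter_add (E := E) h𝒜 hm hB (h𝒜.compl_mem hB)
  rw [union_compl_self, inter_compl_self, univ_inter, empty_inter,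
    innerMeasure_of_mem h𝒜 hm h𝒜.empty_mem, hm.empty_eq h𝒜, add_zero] at h
  exact h.symm

end Charge

section Adjoin

variable {X : Type*} {𝒜 : Set (Set X)} {m : Set X → ℝ} {B C E S T : Set X}

theorem compl_inter_eq_of_inter_eq (h : S ∩ E = B ∩ E) : Sᶜ ∩ E = Bᶜ ∩ E := by
  rw [← sdiff_eq_compl_inter, ← sdiff_eq_compl_inter, ← sdiff_inter_self_eq_sdiff, h,
    sdiff_inter_self_eq_sdiff]

theorem union_inter_eq_of_inter_eq (hS : S ∩ E = B ∩ E) (hT : T ∩ E = C ∩ E) :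
    (S ∪ T) ∩ E = (B ∪ C) ∩ E := by
  rw [union_inter_distrib_right, hS, hT, union_inter_distrib_right]

theorem inter_inter_eq_of_inter_eq (hS : S ∩ E = B ∩ E) (hT : T ∩ E = C ∩ E) :
    (S ∩ T) ∩ E = (B ∩ C) ∩ E := by
  rw [inter_inter_distrib_right, hS, hT, ← inter_inter_distrib_right]

/-- The algebra generated by `𝒜` and `E`. -/
def adjoinAlgebra (𝒜 : Set (Set X)) (E : Set X) : Set (Set X) :=
  {S | (∃ B ∈ 𝒜, S ∩ E = B ∩ E) ∧ ∃ B ∈ 𝒜, S ∩ Eᶜ = B ∩ Eᶜ}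

theorem subset_adjoinAlgebra : 𝒜 ⊆ adjoinAlgebra 𝒜 E :=
  fun S hS => ⟨⟨S, hS, rfl⟩, ⟨S, hS, rfl⟩⟩

theorem MeasureTheory.IsSetAlgebra.mem_adjoinAlgebra_self (h𝒜 : IsSetAlgebra 𝒜) :
    E ∈ adjoinAlgebra 𝒜 E :=
  ⟨⟨univ, h𝒜.univ_mem, by rw [univ_inter, inter_self]⟩,
    ⟨∅, h𝒜.empty_mem, by rw [inter_compl_self, empty_inter]⟩⟩

theorem MeasureTheory.IsSetAlgebra.adjoinAlgebra (h𝒜 : IsSetAlgebra 𝒜) :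
    IsSetAlgebra (adjoinAlgebra 𝒜 E) where
  empty_mem := subset_adjoinAlgebra h𝒜.empty_mem
  compl_mem := by
    rintro S ⟨⟨B₁, hB₁, h₁⟩, ⟨B₂, hB₂, h₂⟩⟩
    exact ⟨⟨B₁ᶜ, h𝒜.compl_mem hB₁, compl_inter_eq_of_inter_eq h₁⟩,
      ⟨B₂ᶜ, h𝒜.compl_mem hB₂, compl_inter_eq_of_inter_eq h₂⟩⟩
  union_mem := by
    rintro S T ⟨⟨B₁, hB₁, h₁⟩, ⟨B₂, hB₂, h₂⟩⟩ ⟨⟨C₁, hC₁, k₁⟩, ⟨C₂, hC₂, k₂⟩⟩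
    exact ⟨⟨B₁ ∪ C₁, h𝒜.union_mem hB₁ hC₁, union_inter_eq_of_inter_eq h₁ k₁⟩,
      ⟨B₂ ∪ C₂, h𝒜.union_mem hB₂ hC₂, union_inter_eq_of_inter_eq h₂ k₂⟩⟩

/-- The Łoś–Marczewski extension of `m` to `adjoinAlgebra 𝒜 E`: it gives `S ∩ E` its inner
measure and `S ∩ Eᶜ` its outer measure `1 - innerMeasure 𝒜 m (S ∩ Eᶜ)ᶜ`. -/
noncomputable def adjoinCharge (𝒜 : Set (Set X)) (m : Set X → ℝ) (E S : Set X) : ℝ :=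
  innerMeasure 𝒜 m (S ∩ E) + (1 - innerMeasure 𝒜 m (Sᶜ ∪ E))

variable (h𝒜 : IsSetAlgebra 𝒜) (hm : IsProbCharge 𝒜 m)
include h𝒜 hm

theorem adjoinCharge_eq {B₁ B₂ : Set X} (hB₂ : B₂ ∈ 𝒜) (h₁ : S ∩ E = B₁ ∩ E)
    (h₂ : S ∩ Eᶜ = B₂ ∩ Eᶜ) :
    adjoinCharge 𝒜 m E S =
      innerMeasure 𝒜 m (B₁ ∩ E) + m B₂ - innerMeasure 𝒜 m (B₂ ∩ E) := by
  have hc : Sᶜ ∪ E = B₂ᶜ ∪ E := by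
    simpa only [compl_inter, compl_compl] using congrArg compl h₂
  have hsplit := innerMeasure_inter_add_compl_inter (E := B₂ᶜ ∪ E) h𝒜 hm hB₂
  rw [inter_union_distrib_left, inter_compl_self, empty_union,
    inter_eq_left.2 subset_union_left,
    innerMeasure_of_mem h𝒜 hm (h𝒜.compl_mem hB₂), hm.compl_eq B₂ hB₂] at hsplit
  rw [adjoinCharge, h₁, hc]
  linarith

theorem adjoinCharge_of_mem (hS : S ∈ 𝒜) : adjoinCharge 𝒜 m E S = m S := by
  rw [adjoinCharge_eq h𝒜 hm hS rfl rfl]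
  ring

theorem adjoinCharge_self : adjoinCharge 𝒜 m E E = innerMeasure 𝒜 m E := by
  rw [adjoinCharge, inter_self, compl_union_self, innerMeasure_of_mem h𝒜 hm h𝒜.univ_mem,
    hm.univ_eq, sub_self, add_zero]

theorem isProbCharge_adjoinCharge : IsProbCharge (adjoinAlgebra 𝒜 E) (adjoinCharge 𝒜 m E) where
  univ_eq := by rw [adjoinCharge_of_mem h𝒜 hm h𝒜.univ_mem, hm.univ_eq]
  nonneg S _ := by
    unfold adjoinCharge
    linarith [innerMeasure_nonneg (T := S ∩ E) h𝒜 hm, innerMeasure_le_one (T := Sᶜ ∪ E) h𝒜 hm]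
  compl_eq := by
    rintro S ⟨⟨B₁, hB₁, h₁⟩, ⟨B₂, hB₂, h₂⟩⟩
    rw [adjoinCharge_eq h𝒜 hm hB₂ h₁ h₂, adjoinCharge_eq h𝒜 hm (h𝒜.compl_mem hB₂)
      (compl_inter_eq_of_inter_eq h₁) (compl_inter_eq_of_inter_eq h₂), hm.compl_eq B₂ hB₂]
    linarith [innerMeasure_inter_add_compl_inter (E := E) h𝒜 hm hB₁,
      innerMeasure_inter_add_compl_inter (E := E) h𝒜 hm hB₂]
  union_eq := by
    rintro S ⟨⟨B₁, hB₁, h₁⟩, ⟨B₂, hB₂, h₂⟩⟩ T ⟨⟨C₁, hC₁, k₁⟩, ⟨C₂, hC₂, k₂⟩⟩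
    rw [adjoinCharge_eq h𝒜 hm hB₂ h₁ h₂, adjoinCharge_eq h𝒜 hm hC₂ k₁ k₂,
      adjoinCharge_eq h𝒜 hm (h𝒜.union_mem hB₂ hC₂) (union_inter_eq_of_inter_eq h₁ k₁)
        (union_inter_eq_of_inter_eq h₂ k₂),
      adjoinCharge_eq h𝒜 hm (h𝒜.inter_mem hB₂ hC₂) (inter_inter_eq_of_inter_eq h₁ k₁)
        (inter_inter_eq_of_inter_eq h₂ k₂)]
    linarith [innerMeasure_union_inter_add (E := E) h𝒜 hm hB₁ hC₁,
      innerMeasure_union_inter_add (E := E) h𝒜 hm hB₂ hC₂, hm.union_eq B₂ hB₂ C₂ hC₂]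

end Adjoin

section Extension

variable {X : Type*}

structure PartialCharge (X : Type*) where
  dom : Set (Set X)
  toFun : Set X → ℝ
  isSetAlgebra : IsSetAlgebra dom
  isProbCharge : IsProbCharge dom toFun

namespace PartialCharge

instance : Preorder (PartialCharge X) where
  le p q := p.dom ⊆ q.dom ∧ EqOn q.toFun p.toFun p.dom
  le_refl p := ⟨subset_rfl, fun _ _ => rfl⟩
  le_trans p q r hpq hqr := ⟨hpq.1.trans hqr.1, fun _ hs => (hqr.2 (hpq.1 hs)).trans (hpq.2 hs)⟩

noncomputable def adjoin (p : PartialCharge X) (E : Set X) : PartialCharge X :=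
  ⟨adjoinAlgebra p.dom E, adjoinCharge p.dom p.toFun E, p.isSetAlgebra.adjoinAlgebra,
    isProbCharge_adjoinCharge p.isSetAlgebra p.isProbCharge⟩

theorem le_adjoin (p : PartialCharge X) (E : Set X) : p ≤ p.adjoin E :=
  ⟨subset_adjoinAlgebra, fun _ hs => adjoinCharge_of_mem p.isSetAlgebra p.isProbCharge hs⟩

theorem dom_eq_univ_of_isMax {p : PartialCharge X} (hp : IsMax p) : p.dom = univ := by
  refine eq_univ_of_forall fun E => ?_
  exact (hp (p.le_adjoin E)).1 (p.isSetAlgebra.mem_adjoinAlgebra_self)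

section Chain

variable {c : Set (PartialCharge X)} (hc : IsChain (· ≤ ·) c)
include hc

theorem exists_mem_dom_of_isChain {p q : PartialCharge X} (hp : p ∈ c) (hq : q ∈ c)
    {S T : Set X} (hS : S ∈ p.dom) (hT : T ∈ q.dom) : ∃ r ∈ c, S ∈ r.dom ∧ T ∈ r.dom := by
  obtain ⟨r, hr, hpr, hqr⟩ := hc.directedOn p hp q hq
  exact ⟨r, hr, hpr.1 hS, hqr.1 hT⟩

noncomputable def chainFun (c : Set (PartialCharge X)) (S : Set X) : ℝ :=
  open Classical in
  if h : ∃ p ∈ c, S ∈ p.dom then h.choose.toFun S else 0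

theorem chainFun_eq {p : PartialCharge X} (hp : p ∈ c) {S : Set X} (hS : S ∈ p.dom) :
    chainFun c S = p.toFun S := by
  have h : ∃ p ∈ c, S ∈ p.dom := ⟨p, hp, hS⟩
  rw [chainFun, dif_pos h]
  obtain ⟨r, hr, hqr, hpr⟩ := hc.directedOn _ h.choose_spec.1 p hp
  exact (hqr.2 h.choose_spec.2).symm.trans (hpr.2 hS)

theorem isSetAlgebra_biUnion_dom (hne : c.Nonempty) : IsSetAlgebra (⋃ p ∈ c, p.dom) where
  empty_mem := mem_iUnion₂.2 ⟨_, hne.some_mem, hne.some.isSetAlgebra.empty_mem⟩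
  compl_mem S hS := by
    obtain ⟨p, hp, hS⟩ := mem_iUnion₂.1 hS
    exact mem_iUnion₂.2 ⟨p, hp, p.isSetAlgebra.compl_mem hS⟩
  union_mem S T hS hT := by
    obtain ⟨p, hp, hS⟩ := mem_iUnion₂.1 hS
    obtain ⟨q, hq, hT⟩ := mem_iUnion₂.1 hT
    obtain ⟨r, hr, hS, hT⟩ := exists_mem_dom_of_isChain hc hp hq hS hT
    exact mem_iUnion₂.2 ⟨r, hr, r.isSetAlgebra.union_mem hS hT⟩

theorem isProbCharge_chainFun (hne : c.Nonempty) :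
    IsProbCharge (⋃ p ∈ c, p.dom) (chainFun c) where
  univ_eq := by
    rw [chainFun_eq hc hne.some_mem hne.some.isSetAlgebra.univ_mem,
      hne.some.isProbCharge.univ_eq]
  nonneg S hS := by
    obtain ⟨p, hp, hS⟩ := mem_iUnion₂.1 hS
    rw [chainFun_eq hc hp hS]
    exact p.isProbCharge.nonneg S hS
  compl_eq S hS := by
    obtain ⟨p, hp, hS⟩ := mem_iUnion₂.1 hS
    rw [chainFun_eq hc hp hS, chainFun_eq hc hp (p.isSetAlgebra.compl_mem hS)]
    exact p.isProbCharge.compl_eq S hS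
  union_eq S hS T hT := by
    obtain ⟨p, hp, hS⟩ := mem_iUnion₂.1 hS
    obtain ⟨q, hq, hT⟩ := mem_iUnion₂.1 hT
    obtain ⟨r, hr, hS, hT⟩ := exists_mem_dom_of_isChain hc hp hq hS hT
    rw [chainFun_eq hc hr hS, chainFun_eq hc hr hT,
      chainFun_eq hc hr (r.isSetAlgebra.union_mem hS hT),
      chainFun_eq hc hr (r.isSetAlgebra.inter_mem hS hT)]
    exact r.isProbCharge.union_eq S hS T hT

theorem bddAbove_of_isChain (hne : c.Nonempty) : BddAbove c :=
  ⟨⟨_, _, isSetAlgebra_biUnion_dom hc hne, isProbCharge_chainFun hc hne⟩,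
    fun _ hp => ⟨subset_biUnion_of_mem hp, fun _ hS => chainFun_eq hc hp hS⟩⟩

end Chain

end PartialCharge

theorem IsProbCharge.exists_extension {𝒜 : Set (Set X)} {m : Set X → ℝ}
    (h𝒜 : IsSetAlgebra 𝒜) (hm : IsProbCharge 𝒜 m) (E : Set X) :
    ∃ m' : Set X → ℝ, IsProbCharge univ m' ∧ EqOn m' m 𝒜 ∧ m' E = innerMeasure 𝒜 m E := by
  let p : PartialCharge X := ⟨𝒜, m, h𝒜, hm⟩
  obtain ⟨q, hpq, hq⟩ := zorn_le_nonempty_Ici₀ (p.adjoin E)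
    (fun c _ hc y hy => PartialCharge.bddAbove_of_isChain hc ⟨y, hy⟩) (p.adjoin E) le_rfl
  refine ⟨q.toFun, PartialCharge.dom_eq_univ_of_isMax hq ▸ q.isProbCharge, fun S hS => ?_, ?_⟩
  · exact ((p.le_adjoin E).trans hpq).2 hS
  · exact (hpq.2 h𝒜.mem_adjoinAlgebra_self).trans (adjoinCharge_self h𝒜 hm)

end Extension

section Approximation

variable {X : Type*} {𝒜 : Set (Set X)} {m : Set X → ℝ} {T : Set X}

theorem exists_sandwich_of_innerMeasure_eq (h𝒜 : IsSetAlgebra 𝒜) (hm : IsProbCharge 𝒜 m)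
    (hT : innerMeasure 𝒜 m T = m T) (hTc : innerMeasure 𝒜 m Tᶜ = 1 - m T) {ε : ℝ}
    (hε : 0 < ε) :
    ∃ G ∈ 𝒜, ∃ G' ∈ 𝒜, G ⊆ T ∧ T ⊆ G' ∧ m G ≤ m T ∧ m T ≤ m G' ∧ m G' - m G < ε := by
  obtain ⟨G, hG, hGT, hlt⟩ :=
    exists_lt_of_lt_innerMeasure h𝒜 (show m T - ε / 2 < innerMeasure 𝒜 m T by linarith)
  obtain ⟨H, hH, hHT, hlt'⟩ :=
    exists_lt_of_lt_innerMeasure h𝒜 (show 1 - m T - ε / 2 < innerMeasure 𝒜 m Tᶜ by linarith)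
  have hle := le_innerMeasure h𝒜 hm hG hGT
  have hle' := le_innerMeasure h𝒜 hm hH hHT
  refine ⟨G, hG, Hᶜ, h𝒜.compl_mem hH, hGT, subset_compl_comm.1 hHT, by linarith, ?_, ?_⟩ <;>
    linarith [hm.compl_eq H hH]

end Approximation

section KeislerMeasure

variable {L : FirstOrder.Language} {M : Type*} [L.Structure M] {A : Set M} {α β : Type*}

theorem Set.Definable.cyl {γ : Type*} (f : α → γ) {S : Set (α → M)} (hS : A.Definable L S) :
    A.Definable L (cyl f S) :=
  hS.preimage_comp f

theorem BAlg.definable {S : Set (α ⊕ β → M)} (h : BAlg L M A α β S) :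
    (univ : Set M).Definable L S := by
  induction h with
  | cylinder X hX => exact hX.cyl Sum.inl
  | base S hS => exact hS.mono (subset_univ A)
  | compl S _ ih => exact ih.compl
  | union S T _ _ ihS ihT => exact ihS.union ihT

theorem isSetAlgebra_bAlg : IsSetAlgebra {S | BAlg L M A α β S} where
  empty_mem := BAlg.base _ Set.definable_empty
  compl_mem S hS := BAlg.compl S hS
  union_mem S T hS hT := BAlg.union S T hS hT

theorem KeislerMeasure.isProbCharge (om : KeislerMeasure L M A α) :
    IsProbCharge {S | A.Definable L S} om.toFun :=
  ⟨om.measure_univ, om.nonneg', om.compl', fun S hS T hT => om.union_inter' S T hS hT⟩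

theorem KeislerMeasure.isProbCharge_bAlg (om : KeislerMeasure L M univ (α ⊕ β)) :
    IsProbCharge {S | BAlg L M A α β S} om.toFun :=
  om.isProbCharge.anti fun _ hS => BAlg.definable hS

def KeislerMeasure.ofIsProbCharge {m : Set (α → M) → ℝ}
    (hm : IsProbCharge {S | A.Definable L S} m) : KeislerMeasure L M A α :=
  ⟨m, hm.univ_eq, hm.nonneg, hm.compl_eq, fun S T hS hT => hm.union_eq S hS T hT⟩

theorem innerMeasure_bAlg_eq {lam : KeislerMeasure L M A (α ⊕ β)}
    {mu : KeislerMeasure L M univ α} {om : KeislerMeasure L M univ (α ⊕ β)}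
    (hom : om ∈ extSpace L A lam mu) {T : Set (α ⊕ β → M)}
    (hT : ∀ om' ∈ extSpace L A lam mu, om'.toFun T = om.toFun T) :
    innerMeasure {S | BAlg L M A α β S} om.toFun T = om.toFun T := by
  obtain ⟨m', hm', heq, hmT⟩ := IsProbCharge.exists_extension isSetAlgebra_bAlg
    om.isProbCharge_bAlg T
  let om' : KeislerMeasure L M univ (α ⊕ β) :=
    KeislerMeasure.ofIsProbCharge (hm'.anti (subset_univ _))
  have hom' : om' ∈ extSpace L A lam mu :=
    ⟨fun S hS => (heq (BAlg.base S hS)).trans (hom.1 S hS),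
      fun X hX => (heq (BAlg.cylinder X hX)).trans (hom.2 X hX)⟩
  exact hmT.symm.trans (hT om' hom')

end KeislerMeasure

theorem extDom_approximation_general {L : FirstOrder.Language} {M : Type*} [L.Structure M]
    (A : Set M) {α β : Type*}
    (mu : KeislerMeasure L M (Set.univ : Set M) α)
    (nu : KeislerMeasure L M (Set.univ : Set M) β)
    (lam : KeislerMeasure L M A (α ⊕ β))
    (hwit : ∀ om ∈ extSpace L A lam mu, ∀ Y : Set (β → M),
      (Set.univ : Set M).Definable L Y → om.toFun (cyl Sum.inr Y) = nu.toFun Y) :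
    ∀ om ∈ extSpace L A lam mu, ∀ D : Set (β → M),
      (Set.univ : Set M).Definable L D → ∀ ε : ℝ, 0 < ε →
      ∃ Gm Gp : Set (α ⊕ β → M), BAlg L M A α β Gm ∧ BAlg L M A α β Gp ∧
        Gm ⊆ cyl Sum.inr D ∧ cyl Sum.inr D ⊆ Gp ∧
        om.toFun Gp - om.toFun Gm < ε ∧
        |om.toFun Gm - nu.toFun D| < ε ∧ |om.toFun Gp - nu.toFun D| < ε := by
  intro om hom D hD ε hε
  have hinner {Y : Set (β → M)} (hY : (univ : Set M).Definable L Y) :=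
    innerMeasure_bAlg_eq hom fun om' hom' =>
      (hwit om' hom' Y hY).trans (hwit om hom Y hY).symm
  have hDc : innerMeasure {S | BAlg L M A α β S} om.toFun (cyl Sum.inr D)ᶜ =
      1 - om.toFun (cyl Sum.inr D) :=
    (hinner hD.compl).trans (om.compl' _ (hD.cyl Sum.inr))
  obtain ⟨Gm, hGm, Gp, hGp, hGmD, hDGp, hle, hle', hlt⟩ := exists_sandwich_of_innerMeasure_eq
    isSetAlgebra_bAlg om.isProbCharge_bAlg (hinner hD) hDc hε
  rw [hwit om hom D hD] at hle hle'
  refine ⟨Gm, Gp, hGm, hGp, hGmD, hDGp, hlt, abs_lt.2 ⟨?_, ?_⟩, abs_lt.2 ⟨?_, ?_⟩⟩ <;> linarith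

/-- Approximation property: if `λ` witnesses `μ ≥_{E,A} ν`, then for every
`ω ∈ E(λ,μ)`, every globally definable `D ∈ L_β(M)` and every `ε > 0` there are
`G⁻, G⁺ ∈ 𝔹_{αβ}(A)` with `G⁻ ⊆ M^α × D ⊆ G⁺`, `ω(G⁺) − ω(G⁻) < ε`, and
`|ω(G^±) − ν(D)| < ε`. -/
theorem extDom_approximation {L : FirstOrder.Language} {M : Type*} [L.Structure M]
    (A : Set M) {α β : Type*}
    (mu : KeislerMeasure L M (Set.univ : Set M) α)
    (nu : KeislerMeasure L M (Set.univ : Set M) β)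
    (lam : KeislerMeasure L M A (α ⊕ β))
    (hmarg : ∀ X : Set (α → M), A.Definable L X →
      lam.toFun (cyl Sum.inl X) = mu.toFun X)
    (hwit : ∀ om ∈ extSpace L A lam mu, ∀ Y : Set (β → M),
      (Set.univ : Set M).Definable L Y → om.toFun (cyl Sum.inr Y) = nu.toFun Y) :
    ∀ om ∈ extSpace L A lam mu, ∀ D : Set (β → M),
      (Set.univ : Set M).Definable L D → ∀ ε : ℝ, 0 < ε →
      ∃ Gm Gp : Set (α ⊕ β → M), BAlg L M A α β Gm ∧ BAlg L M A α β Gp ∧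
        Gm ⊆ cyl Sum.inr D ∧ cyl Sum.inr D ⊆ Gp ∧
        om.toFun Gp - om.toFun Gm < ε ∧
        |om.toFun Gm - nu.toFun D| < ε ∧ |om.toFun Gp - nu.toFun D| < ε :=
  extDom_approximation_general A mu nu lam hwit
end
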